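/- arXiv:0706.2910 — 3 statements merged into one kernel-verified Lean document; each statement's English description precedes it below -/
import Mathlib

section
/- If J, K ⊆ S are conjugate subsets (σ⁻¹Jσ = K for some σ ∈ D_n), then the compositions κ and ν corresponding under the natural correspondence to J^c and K^c respectively have the same components: the components of κ can be reordered to give the components of ν. -/
/-- The Coxeter generators of type `D` as permutations of `ℤ`: `genD 0` is
`s_{1'} = (-2,1)(-1,2)` and, for `i ≥ 1`, `genD i` is `s_i = (-i-1,-i)(i,i+1)`. -/
def genD (i : ℕ) : Equiv.Perm ℤ :=
  if i = 0 then Equiv.swap (-2 : ℤ) 1 * Equiv.swap (-1 : ℤ) 2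
  else Equiv.swap (-(i : ℤ) - 1) (-(i : ℤ)) * Equiv.swap (i : ℤ) ((i : ℤ) + 1)

/-- The Coxeter generating set `S = {s_{1'}, s_1, …, s_{n-1}}` of `D_n`. -/
def genSetD (n : ℕ) : Set (Equiv.Perm ℤ) := {g | ∃ i < n, g = genD i}

/-- Membership in `D_n`, realized as the permutations `σ` of `ℤ` fixing everything
outside `{-n,…,-1,1,…,n}`, satisfying `σ(-i) = -σ(i)` for all `i`, and having an
even number of `i ∈ {1,…,n}` with `σ i < 0`. -/
def IsDn (n : ℕ) (σ : Equiv.Perm ℤ) : Prop :=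
  (∀ i : ℤ, σ (-i) = -σ i) ∧ (∀ i : ℤ, (n : ℤ) < |i| → σ i = i) ∧
    Even (((Finset.Icc (1 : ℤ) (n : ℤ)).filter fun i => σ i < 0).card)

/-- `J` and `K` are conjugate subsets of `S`: `σ⁻¹ J σ = K` for some `σ ∈ D_n`. -/
def ConjugateIn (n : ℕ) (J K : Set (Equiv.Perm ℤ)) : Prop :=
  ∃ σ : Equiv.Perm ℤ, IsDn n σ ∧ (fun s => σ⁻¹ * s * σ) '' J = K

/-- Tags for the four classes making up the multiset `C(n)`:
`C_{<n}`, `C_1`, `C_n` and `C_n'`. -/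
inductive CTag | lt | one | cn | cn'
  deriving DecidableEq

/-- An element of the multiset `C(n)`: a composition (list of positive integers)
together with the tag of the class it lies in, subject to the defining conditions
of that class. -/
structure CompD (n : ℕ) where
  tag : CTag
  parts : List ℕ
  pos : ∀ x ∈ parts, 0 < x
  valid : match tag with
    | CTag.lt => parts.sum + 2 ≤ n
    | CTag.one => parts.sum = n ∧ parts.headI = 1
    | CTag.cn => parts.sum = n ∧ 2 ≤ parts.headI
    | CTag.cn' => parts.sum = n ∧ 2 ≤ parts.headI

/-- The natural correspondence sending `κ ∈ C(n)` to a subset of `S`. -/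
def corrD (n : ℕ) (c : CompD n) : Set (Equiv.Perm ℤ) :=
  match c.tag with
  | CTag.lt => {g | ∃ j < c.parts.length, g = genD (n - c.parts.sum + (c.parts.take j).sum)}
  | CTag.one => {genD 0} ∪ {g | ∃ j, 1 ≤ j ∧ j < c.parts.length ∧ g = genD ((c.parts.take j).sum)}
  | CTag.cn => {genD 0} ∪ {g | ∃ j, 1 ≤ j ∧ j < c.parts.length ∧ g = genD ((c.parts.take j).sum)}
  | CTag.cn' => {genD 1} ∪ {g | ∃ j, 1 ≤ j ∧ j < c.parts.length ∧ g = genD ((c.parts.take j).sum)}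

/-- The equivalence `κ ≈ ν` on `C(n)`: the components of `κ` are a reordering of
those of `ν`, except that this fails when all components are even and one of
`κ, ν` lies in `C_n` while the other lies in `C_n'`. -/
def approxD {n : ℕ} (c d : CompD n) : Prop :=
  c.parts.Perm d.parts ∧
    ¬ ((∀ x ∈ c.parts, Even x) ∧
      ((c.tag = CTag.cn ∧ d.tag = CTag.cn') ∨ (c.tag = CTag.cn' ∧ d.tag = CTag.cn)))

/-!
Conjugation by `σ` replaces the set of points moved by a permutation with its preimage under `σ`.
Hence it carries the graph on `J`, in which two generators are joined when their moved points
overlap, isomorphically onto the graph on `K`, preserving the relation of moving the same points.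
So `|J|` and the multiset of sizes of the connected components that contain no two generators
with the same moved points are conjugation invariants.

The generator with index `i` moves `±max(i,1)` and `±(max(i,1)+1)`. Hence, when `J` is the
complement of the subset given by `κ`, the components of `J` are the maximal runs of consecutive
indices containing no marker of `κ`. A part `x ≥ 2` gives a component of size `x - 1`, and the
run containing both `s_{1'}` and `s_1` (the `D_{n-m}` factor for `κ ∈ C_{<n}`) is discarded.
The case `C_n'` reduces to `C_n` by the diagram symmetry `s_{1'} ↔ s_1`. Since `κ` has
`n - |J|` parts, the invariants determine its multiset of parts.
-/

open Finset Function Equiv MulAction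

section Components

variable {α β : Type*}

def ReachIn (r : α → α → Prop) (A : Finset α) : α → α → Prop :=
  Relation.ReflTransGen fun x y => y ∈ A ∧ r x y

open Classical in
noncomputable def componentIn (r : α → α → Prop) (A : Finset α) (x : α) : Finset α :=
  {y ∈ A | ReachIn r A x y}

noncomputable def componentsIn [DecidableEq α] (r : α → α → Prop) (A : Finset α) :
    Finset (Finset α) :=
  A.image (componentIn r A)

def IsTwinFree (t : α → α → Prop) (C : Finset α) : Prop :=
  ∀ x ∈ C, ∀ y ∈ C, t x y → x = y

open Classical in
noncomputable def componentSizes [DecidableEq α] (r t : α → α → Prop) (A : Finset α) :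
    Multiset ℕ :=
  ∑ C ∈ componentsIn r A with IsTwinFree t C, {C.card}

variable {r t : α → α → Prop} {A B : Finset α} {x y : α}

theorem ReachIn.mem (h : ReachIn r A x y) (hx : x ∈ A) : y ∈ A := by
  induction h with
  | refl => exact hx
  | tail _ hstep _ => exact hstep.1

theorem mem_componentIn : y ∈ componentIn r A x ↔ y ∈ A ∧ ReachIn r A x y := by
  simp [componentIn]

theorem self_mem_componentIn (hx : x ∈ A) : x ∈ componentIn r A x :=
  mem_componentIn.2 ⟨hx, .refl⟩

theorem componentIn_subset : componentIn r A x ⊆ A := fun _ hy => (mem_componentIn.1 hy).1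

variable [DecidableEq α]

theorem reachIn_image_iff {f : β → α} (hf : Injective f) {s : Finset β} {x y : β} :
    ReachIn r (s.image f) (f x) (f y) ↔ ReachIn (fun a b => r (f a) (f b)) s x y := by
  constructor
  · suffices ∀ z, ReachIn r (s.image f) z (f y) → ∀ x, z = f x →
        ReachIn (fun a b => r (f a) (f b)) s x y from fun h => this _ h x rfl
    intro z h
    induction h using Relation.ReflTransGen.head_induction_on with
    | refl =>
      rintro x hx
      rw [hf hx]
      exact .refl
    | head hstep _ ih =>
      rintro x rfl
      obtain ⟨⟨b, hb, rfl⟩, hr⟩ := And.imp_left mem_image.1 hstep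
      exact Relation.ReflTransGen.head ⟨hb, hr⟩ (ih b rfl)
  · intro h
    exact h.lift f fun a b hab => ⟨mem_image_of_mem f hab.1, hab.2⟩

@[simp]
theorem componentSizes_empty : componentSizes r t ∅ = 0 := by
  simp [componentSizes, componentsIn]

theorem componentIn_image [DecidableEq β] {f : β → α} (hf : Injective f) {s : Finset β}
    {x : β} :
    componentIn r (s.image f) (f x) = (componentIn (fun a b => r (f a) (f b)) s x).image f := by
  ext z
  simp only [mem_componentIn, mem_image]
  constructor
  · rintro ⟨⟨y, hy, rfl⟩, hreach⟩
    exact ⟨y, ⟨hy, (reachIn_image_iff hf).1 hreach⟩, rfl⟩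
  · rintro ⟨y, ⟨hy, hreach⟩, rfl⟩
    exact ⟨⟨y, hy, rfl⟩, (reachIn_image_iff hf).2 hreach⟩

theorem componentSizes_image [DecidableEq β] {f : β → α} (hf : Injective f) {s : Finset β} :
    componentSizes r t (s.image f) =
      componentSizes (fun a b => r (f a) (f b)) (fun a b => t (f a) (f b)) s := by
  classical
  have hcomps : componentsIn r (s.image f) =
      (componentsIn (fun a b => r (f a) (f b)) s).image (image f) := by
    simp only [componentsIn, image_image]
    exact image_congr fun x _ => componentIn_image hf
  have htwin (C : Finset β) :
      IsTwinFree t (C.image f) ↔ IsTwinFree (fun a b => t (f a) (f b)) C := by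
    simp only [IsTwinFree, forall_mem_image, hf.eq_iff]
  rw [componentSizes, componentSizes, hcomps, filter_image,
    sum_image fun C _ D _ h => image_injective hf h]
  exact sum_congr (filter_congr fun C _ => htwin C) fun C _ => by
    rw [card_image_of_injective _ hf]

theorem reachIn_union_left (hsep : ∀ a ∈ A, ∀ b ∈ B, ¬ r a b) (hx : x ∈ A)
    (h : ReachIn r (A ∪ B) x y) : ReachIn r A x y := by
  induction h with
  | refl => exact .refl
  | tail _ hstep ih =>
    refine ih.tail ⟨?_, hstep.2⟩
    rcases mem_union.1 hstep.1 with hc | hc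
    · exact hc
    · exact absurd hstep.2 (hsep _ (ih.mem hx) _ hc)

theorem componentIn_union_left (hsep : ∀ a ∈ A, ∀ b ∈ B, ¬ r a b) (hx : x ∈ A) :
    componentIn r (A ∪ B) x = componentIn r A x := by
  ext y
  simp only [mem_componentIn, mem_union]
  constructor
  · rintro ⟨-, h⟩
    have h' := reachIn_union_left hsep hx h
    exact ⟨h'.mem hx, h'⟩
  · rintro ⟨hy, h⟩
    exact ⟨Or.inl hy, h.lift id fun a b hab => ⟨mem_union_left B hab.1, hab.2⟩⟩

theorem componentSizes_union (hAB : Disjoint A B) (hsep : ∀ a ∈ A, ∀ b ∈ B, ¬ r a b)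
    (hsep' : ∀ b ∈ B, ∀ a ∈ A, ¬ r b a) :
    componentSizes r t (A ∪ B) = componentSizes r t A + componentSizes r t B := by
  classical
  have hcomps : componentsIn r (A ∪ B) = componentsIn r A ∪ componentsIn r B := by
    rw [componentsIn, image_union]
    congr 1
    · exact image_congr fun x hx => componentIn_union_left hsep hx
    · exact image_congr fun x hx => by
        rw [union_comm]
        exact componentIn_union_left hsep' hx
  have hdisj : Disjoint (componentsIn r A) (componentsIn r B) := by
    simp only [disjoint_left, componentsIn, mem_image]
    rintro _ ⟨x, hx, rfl⟩ ⟨y, -, hxy⟩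
    exact disjoint_left.1 hAB hx (componentIn_subset (hxy ▸ self_mem_componentIn hx))
  rw [componentSizes, hcomps, filter_union, sum_union (disjoint_filter_filter hdisj)]
  rfl

open Classical in
theorem componentSizes_of_reachIn (hA : A.Nonempty)
    (hconn : ∀ x ∈ A, ∀ y ∈ A, ReachIn r A x y) :
    componentSizes r t A = if IsTwinFree t A then {A.card} else 0 := by
  have hcomps : componentsIn r A = {A} := by
    rw [componentsIn, ← image_const hA A]
    exact image_congr fun x hx => filter_true_of_mem fun y hy => hconn x hx y hy
  rw [componentSizes, hcomps, filter_singleton]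
  split_ifs <;> simp

end Components

theorem reachIn_Ico {r : ℕ → ℕ → Prop} (hr : ∀ i, r i (i + 1) ∧ r (i + 1) i) {l u x y : ℕ}
    (hx : x ∈ Ico l u) (hy : y ∈ Ico l u) : ReachIn r (Ico l u) x y := by
  have key : ∀ x y, l ≤ x → x ≤ y → y < u →
      ReachIn r (Ico l u) x y ∧ ReachIn r (Ico l u) y x := by
    intro x y hlx hxy hyu
    induction y, hxy using Nat.le_induction with
    | base => exact ⟨.refl, .refl⟩
    | succ y hxy ih =>
      obtain ⟨hto, hfrom⟩ := ih (by omega)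
      exact ⟨hto.tail ⟨mem_Ico.2 ⟨by omega, hyu⟩, (hr y).1⟩,
        hfrom.head ⟨mem_Ico.2 ⟨by omega, by omega⟩, (hr y).2⟩⟩
  rw [mem_Ico] at hx hy
  rcases le_total x y with h | h
  · exact (key x y hx.1 h hy.2).1
  · exact (key y x hy.1 h hx.2).2

section Support

variable {α : Type*}

def Overlap (g h : Perm α) : Prop := ((fixedBy α g)ᶜ ∩ (fixedBy α h)ᶜ).Nonempty

def SameSupport (g h : Perm α) : Prop := fixedBy α g = fixedBy α h

theorem fixedBy_conj_perm (σ g : Perm α) : fixedBy α (σ⁻¹ * g * σ) = σ ⁻¹' fixedBy α g := by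
  ext x
  simp [Perm.mul_apply, eq_comm, Equiv.eq_symm_apply]

theorem overlap_conj (σ g h : Perm α) :
    Overlap (σ⁻¹ * g * σ) (σ⁻¹ * h * σ) ↔ Overlap g h := by
  simp only [Overlap, fixedBy_conj_perm, ← Set.preimage_compl, ← Set.preimage_inter]
  exact σ.surjective.nonempty_preimage

theorem sameSupport_conj (σ g h : Perm α) :
    SameSupport (σ⁻¹ * g * σ) (σ⁻¹ * h * σ) ↔ SameSupport g h := by
  simp only [SameSupport, fixedBy_conj_perm]
  exact Set.preimage_eq_preimage σ.surjective

theorem conj_inv_injective (σ : Perm α) : Injective fun g => σ⁻¹ * g * σ :=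
  (mul_left_injective σ).comp (mul_right_injective σ⁻¹)

open Classical in
theorem componentSizes_image_conj (σ : Perm α) (S : Finset (Perm α)) :
    componentSizes Overlap SameSupport (S.image fun g => σ⁻¹ * g * σ) =
      componentSizes Overlap SameSupport S := by
  rw [componentSizes_image (conj_inv_injective σ)]
  simp only [overlap_conj, sameSupport_conj]

end Support

def Near (i j : ℕ) : Prop := max i 1 ≤ max j 1 + 1 ∧ max j 1 ≤ max i 1 + 1

def Twin (i j : ℕ) : Prop := max i 1 = max j 1

theorem mem_fixedBy_genD_compl {i : ℕ} {x : ℤ} :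
    x ∈ (fixedBy ℤ (genD i))ᶜ ↔ x.natAbs = max i 1 ∨ x.natAbs = max i 1 + 1 := by
  rw [Set.mem_compl_iff, mem_fixedBy, Perm.smul_def]
  rcases Nat.eq_zero_or_pos i with rfl | hi
  · simp only [genD, ↓reduceIte, Perm.mul_apply, swap_apply_def, zero_le, sup_of_le_right]
    split_ifs <;> omega
  · simp only [genD, hi.ne', ↓reduceIte, Perm.mul_apply, swap_apply_def]
    split_ifs <;> omega

theorem overlap_genD_iff {i j : ℕ} : Overlap (genD i) (genD j) ↔ Near i j := by
  simp only [Overlap, Near, Set.Nonempty, Set.mem_inter_iff, mem_fixedBy_genD_compl]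
  constructor
  · rintro ⟨x, hi, hj⟩
    omega
  · intro h
    refine ⟨(max (max i 1) (max j 1) : ℕ), ?_, ?_⟩ <;>
    · rw [Int.natAbs_natCast]
      omega

theorem sameSupport_genD_iff {i j : ℕ} : SameSupport (genD i) (genD j) ↔ Twin i j := by
  rw [SameSupport, ← compl_inj_iff, Twin]
  constructor
  · intro h
    have hi := (Set.ext_iff.1 h ((max i 1 : ℕ) : ℤ)).1
    have hj := (Set.ext_iff.1 h ((max j 1 : ℕ) : ℤ)).2
    simp only [mem_fixedBy_genD_compl, Int.natAbs_natCast, true_or, forall_const] at hi hj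
    omega
  · intro h
    ext x
    simp only [mem_fixedBy_genD_compl, h]

theorem genD_injective : Injective genD := by
  intro i j h
  have htwin : max i 1 = max j 1 := sameSupport_genD_iff.1 (by rw [SameSupport, h])
  by_contra hij
  obtain ⟨rfl, rfl⟩ | ⟨rfl, rfl⟩ : i = 0 ∧ j = 1 ∨ i = 1 ∧ j = 0 := by omega
  all_goals exact absurd (congrArg (· 1) h) (by decide)

section Indices

open Classical

noncomputable def genIndices (n : ℕ) (X : Set (Perm ℤ)) : Finset ℕ :=
  {i ∈ range n | genD i ∈ X}

theorem componentSizes_image_genD (A : Finset ℕ) :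
    componentSizes Overlap SameSupport (A.image genD) = componentSizes Near Twin A := by
  rw [componentSizes_image genD_injective]
  simp only [overlap_genD_iff, sameSupport_genD_iff]

theorem coe_image_genD_genIndices {n : ℕ} {J : Set (Perm ℤ)} (hJ : J ⊆ genSetD n) :
    ((genIndices n J).image genD : Set (Perm ℤ)) = J := by
  ext g
  simp only [genIndices, coe_image, coe_filter, mem_range, Set.mem_image, Set.mem_ofPred_eq]
  constructor
  · rintro ⟨i, ⟨-, hi⟩, rfl⟩
    exact hi
  · intro hg
    obtain ⟨i, hi, rfl⟩ := hJ hg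
    exact ⟨i, ⟨hi, hg⟩, rfl⟩

variable {n : ℕ} {J K : Set (Perm ℤ)} {σ : Perm ℤ}

theorem image_conj_image_genD_genIndices (hJ : J ⊆ genSetD n) (hK : K ⊆ genSetD n)
    (hσ : (fun s => σ⁻¹ * s * σ) '' J = K) :
    ((genIndices n J).image genD).image (fun g => σ⁻¹ * g * σ) = (genIndices n K).image genD := by
  apply coe_injective
  rw [coe_image, coe_image_genD_genIndices hJ, hσ, coe_image_genD_genIndices hK]

theorem componentSizes_genIndices_eq_of_conj (hJ : J ⊆ genSetD n) (hK : K ⊆ genSetD n)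
    (hσ : (fun s => σ⁻¹ * s * σ) '' J = K) :
    componentSizes Near Twin (genIndices n J) = componentSizes Near Twin (genIndices n K) := by
  rw [← componentSizes_image_genD, ← componentSizes_image_genD,
    ← image_conj_image_genD_genIndices hJ hK hσ, componentSizes_image_conj]

theorem card_genIndices_eq_of_conj (hJ : J ⊆ genSetD n) (hK : K ⊆ genSetD n)
    (hσ : (fun s => σ⁻¹ * s * σ) '' J = K) :
    (genIndices n J).card = (genIndices n K).card := by
  rw [← card_image_of_injective _ genD_injective,
    ← card_image_of_injective (genIndices n K) genD_injective,
    ← image_conj_image_genD_genIndices hJ hK hσ, card_image_of_injective _ (conj_inv_injective σ)]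

theorem genIndices_eq_range_sdiff {X : Set (Perm ℤ)} (hX : X = genSetD n \ J) :
    genIndices n J = range n \ genIndices n X := by
  ext i
  simp only [genIndices, hX, mem_sdiff, mem_filter, mem_range, Set.mem_sdiff, genSetD,
    Set.mem_ofPred_eq]
  constructor
  · rintro ⟨hi, hJ⟩
    exact ⟨hi, fun h => h.2.2 hJ⟩
  · rintro ⟨hi, h⟩
    exact ⟨hi, by_contra fun hJ => h ⟨hi, ⟨i, hi, rfl⟩, hJ⟩⟩

theorem genIndices_image_genD {M : Finset ℕ} (hM : ∀ m ∈ M, m < n) :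
    genIndices n (genD '' M) = M := by
  ext i
  simp only [genIndices, mem_filter, mem_range, Set.mem_image, mem_coe,
    genD_injective.eq_iff, exists_eq_right]
  exact ⟨And.right, fun hi => ⟨hM i hi, hi⟩⟩

end Indices

/-- The indices of the generators `s_a, s_{a + L₁}, s_{a + L₁ + L₂}, …` that the natural
correspondence attaches to the composition `L`. -/
def markers (a : ℕ) (L : List ℕ) : Finset ℕ :=
  (range L.length).image fun j => a + (L.take j).sum

def reducedParts (L : List ℕ) : Multiset ℕ :=
  (Multiset.map (· - 1) (L : Multiset ℕ)).filter (· ≠ 0)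

theorem markers_append_singleton (a x : ℕ) (L : List ℕ) :
    markers a (L ++ [x]) = insert (a + L.sum) (markers a L) := by
  rw [markers, List.length_append, List.length_singleton, range_add_one, image_insert,
    List.take_append_of_le_length le_rfl, List.take_length, markers]
  congr 1
  exact image_congr fun j hj => by rw [List.take_append_of_le_length (mem_range.1 hj).le]

theorem lt_of_mem_markers {a m : ℕ} {L : List ℕ} (hL : ∀ x ∈ L, 0 < x)
    (hm : m ∈ markers a L) : m < a + L.sum := by
  obtain ⟨j, hj, rfl⟩ := mem_image.1 hm
  rw [mem_range] at hj
  have hdrop : 0 < (L.drop j).sum := by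
    rw [List.drop_eq_getElem_cons hj, List.sum_cons]
    have := hL _ (List.getElem_mem hj)
    omega
  rw [← List.sum_take_add_sum_drop L j]
  omega

theorem mem_markers_self (a : ℕ) {L : List ℕ} (hL : L ≠ []) : a ∈ markers a L :=
  mem_image.2 ⟨0, mem_range.2 (List.length_pos_iff.2 hL), by simp⟩

theorem card_markers (a : ℕ) {L : List ℕ} (hL : ∀ x ∈ L, 0 < x) :
    (markers a L).card = L.length := by
  induction L using List.reverseRecOn with
  | nil => simp [markers]
  | append_singleton L x ih =>
    have hL' : ∀ y ∈ L, 0 < y := fun y hy => hL y (List.mem_append_left _ hy)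
    rw [markers_append_singleton,
      card_insert_of_notMem fun h => (lt_of_mem_markers hL' h).ne rfl, ih hL',
      List.length_append, List.length_singleton]

theorem reducedParts_append_singleton (L : List ℕ) (x : ℕ) :
    reducedParts (L ++ [x]) = reducedParts L + if 2 ≤ x then {x - 1} else 0 := by
  rw [reducedParts, reducedParts, ← Multiset.coe_add, Multiset.map_add, Multiset.filter_add,
    Multiset.coe_singleton, Multiset.map_singleton, Multiset.filter_singleton]
  exact congrArg _ (if_congr (by omega) rfl rfl)

theorem near_succ (i : ℕ) : Near i (i + 1) ∧ Near (i + 1) i := by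
  simp only [Near]
  omega

theorem componentSizes_Ico {l u : ℕ} (hl : 1 ≤ l) :
    componentSizes Near Twin (Ico l u) = if l < u then {u - l} else 0 := by
  split_ifs with hlu
  · have htwin : IsTwinFree Twin (Ico l u) := by
      intro x hx y hy hxy
      simp only [Twin, mem_Ico] at hx hy hxy
      omega
    rw [componentSizes_of_reachIn (nonempty_Ico.2 hlu)
      fun x hx y hy => reachIn_Ico near_succ hx hy, if_pos htwin, Nat.card_Ico]
  · rw [Ico_eq_empty (by omega), componentSizes_empty]

theorem componentSizes_range {a : ℕ} (ha : a ≠ 1) : componentSizes Near Twin (range a) = 0 := by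
  rcases Nat.eq_zero_or_pos a with rfl | ha0
  · simp
  · have htwin : ¬ IsTwinFree Twin (range a) := fun h =>
      absurd (h 0 (mem_range.2 (by omega)) 1 (mem_range.2 (by omega)) rfl) (by omega)
    rw [range_eq_Ico, componentSizes_of_reachIn (nonempty_Ico.2 ha0)
      fun x hx y hy => reachIn_Ico near_succ hx hy, ← range_eq_Ico, if_neg htwin]

theorem range_sdiff_markers_append_singleton {a x : ℕ} {L : List ℕ} (hL : ∀ y ∈ L, 0 < y) :
    range (a + (L ++ [x]).sum) \ markers a (L ++ [x]) =
      (range (a + L.sum) \ markers a L) ∪ Ico (a + L.sum + 1) (a + L.sum + x) := by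
  ext i
  simp only [mem_sdiff, mem_range, mem_union, mem_Ico, markers_append_singleton, mem_insert,
    List.sum_append, List.sum_singleton]
  by_cases hi : i ∈ markers a L
  · have := lt_of_mem_markers hL hi
    simp only [hi, or_true, not_true_eq_false, and_false, false_or, false_iff]
    omega
  · simp only [hi, or_false, not_false_eq_true, and_true]
    omega

-- `Near 0 2` holds, so for `a = 1` the index `0` would be joined to `2` across the marker `1`.
theorem not_near_of_mem_range_sdiff_markers {a : ℕ} (ha : a ≠ 1) {L : List ℕ} {i j : ℕ}
    (hi : i ∈ range (a + L.sum) \ markers a L) (hj : a + L.sum < j) :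
    ¬ Near i j ∧ ¬ Near j i := by
  rw [mem_sdiff, mem_range] at hi
  have h0 : i = 0 → 2 ≤ a := by
    rintro rfl
    by_contra ha2
    obtain rfl : a = 0 := by omega
    refine hi.2 (mem_markers_self 0 ?_)
    rintro rfl
    simp at hi
  simp only [Near]
  omega

theorem componentSizes_range_sdiff_markers {a : ℕ} (ha : a ≠ 1) {L : List ℕ}
    (hL : ∀ x ∈ L, 0 < x) :
    componentSizes Near Twin (range (a + L.sum) \ markers a L) = reducedParts L := by
  induction L using List.reverseRecOn with
  | nil => simp [markers, reducedParts, componentSizes_range ha]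
  | append_singleton L x ih =>
    have hL' : ∀ y ∈ L, 0 < y := fun y hy => hL y (List.mem_append_left _ hy)
    set s := a + L.sum
    have hdisj : Disjoint (range s \ markers a L) (Ico (s + 1) (s + x)) := by
      simp only [disjoint_left, mem_sdiff, mem_range, mem_Ico]
      omega
    have hsep (i) (hi : i ∈ range s \ markers a L) (j) (hj : j ∈ Ico (s + 1) (s + x)) :=
      not_near_of_mem_range_sdiff_markers ha hi (mem_Ico.1 hj).1
    rw [range_sdiff_markers_append_singleton hL', componentSizes_union hdisj
      (fun i hi j hj => (hsep i hi j hj).1) (fun j hj i hi => (hsep i hi j hj).2), ih hL',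
      componentSizes_Ico (by omega), reducedParts_append_singleton]
    exact congrArg _ (if_congr (by omega) (by rw [show s + x - (s + 1) = x - 1 by omega]) rfl)

theorem card_range_sdiff_markers {a : ℕ} {L : List ℕ} (hL : ∀ x ∈ L, 0 < x) :
    (range (a + L.sum) \ markers a L).card + L.length = a + L.sum := by
  have hsub : markers a L ⊆ range (a + L.sum) := fun m hm =>
    mem_range.2 (lt_of_mem_markers hL hm)
  have hle := card_le_card hsub
  rw [card_markers a hL, card_range] at hle
  rw [card_sdiff_of_subset hsub, card_range, card_markers a hL]
  omega

theorem image_genD_markers_zero {L : List ℕ} (hL : L ≠ []) :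
    genD '' markers 0 L =
      {genD 0} ∪ {g | ∃ j, 1 ≤ j ∧ j < L.length ∧ g = genD (L.take j).sum} := by
  ext g
  simp only [markers, coe_image, coe_range, Set.image_image, Set.mem_image, Set.mem_Iio,
    zero_add, Set.mem_union, Set.mem_singleton_iff, Set.mem_ofPred_eq]
  constructor
  · rintro ⟨_ | j, hj, rfl⟩
    · simp
    · exact Or.inr ⟨j + 1, by omega, hj, rfl⟩
  · rintro (rfl | ⟨j, -, hj, rfl⟩)
    · exact ⟨0, List.length_pos_iff.2 hL, by simp⟩
    · exact ⟨j, hj, rfl⟩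

theorem two_le_sum_take {L : List ℕ} (hL : 2 ≤ L.headI) {j : ℕ} (hj : 1 ≤ j) :
    2 ≤ (L.take j).sum := by
  obtain ⟨_ | ⟨b, t⟩⟩ := L
  · simp at hL
  · obtain ⟨j, rfl⟩ : ∃ k, j = k + 1 := ⟨j - 1, by omega⟩
    simp only [List.headI_cons] at hL
    simp only [List.take_succ_cons, List.sum_cons]
    omega

theorem image_genD_markers_zero_swap {L : List ℕ} (hL : 2 ≤ L.headI) :
    genD '' (markers 0 L).image (Equiv.swap 0 1) =
      {genD 1} ∪ {g | ∃ j, 1 ≤ j ∧ j < L.length ∧ g = genD (L.take j).sum} := by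
  have hne : L ≠ [] := by
    rintro rfl
    simp at hL
  have hfix (j) (hj : 1 ≤ j) : Equiv.swap 0 1 (L.take j).sum = (L.take j).sum := by
    have := two_le_sum_take hL hj
    exact swap_apply_of_ne_of_ne (by omega) (by omega)
  ext g
  simp only [markers, coe_image, coe_range, Set.image_image, Set.mem_image, Set.mem_Iio,
    zero_add, Set.mem_union, Set.mem_singleton_iff, Set.mem_ofPred_eq]
  constructor
  · rintro ⟨_ | j, hj, rfl⟩
    · simp
    · exact Or.inr ⟨j + 1, by omega, hj, by rw [hfix _ (by omega)]⟩
  · rintro (rfl | ⟨j, hj1, hj, rfl⟩)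
    · exact ⟨0, List.length_pos_iff.2 hne, by simp⟩
    · exact ⟨j, hj, by rw [hfix j hj1]⟩

theorem max_swap_zero_one (i : ℕ) : max (Equiv.swap 0 1 i) 1 = max i 1 := by
  rw [swap_apply_def]
  split_ifs <;> omega

theorem swap_zero_one_lt_iff {n i : ℕ} (hn : 2 ≤ n) : Equiv.swap 0 1 i < n ↔ i < n := by
  rw [swap_apply_def]
  split_ifs <;> omega

theorem range_sdiff_image_swap_zero_one {n : ℕ} (hn : 2 ≤ n) (M : Finset ℕ) :
    range n \ M.image (Equiv.swap 0 1) = (range n \ M).image (Equiv.swap 0 1) := by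
  have hrange : (range n).image (Equiv.swap 0 1) = range n := by
    ext i
    rw [mem_image, mem_range]
    exact ⟨fun ⟨j, hj, hji⟩ => hji ▸ (swap_zero_one_lt_iff hn).2 (mem_range.1 hj),
      fun hi => ⟨_, mem_range.2 ((swap_zero_one_lt_iff hn).2 hi), swap_apply_self _ _ _⟩⟩
  rw [image_sdiff _ _ (Equiv.swap 0 1).injective, hrange]

theorem componentSizes_image_swap_zero_one (A : Finset ℕ) :
    componentSizes Near Twin (A.image (Equiv.swap 0 1)) = componentSizes Near Twin A := by
  rw [componentSizes_image (Equiv.swap 0 1).injective]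
  simp only [Near, Twin, max_swap_zero_one]
  rfl

theorem componentSizes_range_sdiff_genIndices_corrD {n : ℕ} (c : CompD n) :
    componentSizes Near Twin (range n \ genIndices n (corrD n c)) = reducedParts c.parts ∧
      (range n \ genIndices n (corrD n c)).card + c.parts.length = n := by
  obtain ⟨tag, L, hL, hvalid⟩ := c
  have hmarkers := And.intro (componentSizes_range_sdiff_markers (a := 0) zero_ne_one hL)
    (card_range_sdiff_markers (a := 0) hL)
  rw [zero_add] at hmarkers
  have hlt (m) (hm : m ∈ markers 0 L) : m < L.sum := by
    simpa using lt_of_mem_markers hL hm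
  cases tag with
  | lt =>
    have hcorr : corrD n ⟨.lt, L, hL, hvalid⟩ = genD '' markers (n - L.sum) L := by
      ext g
      simp [corrD, markers, eq_comm]
    have hsum : L.sum + 2 ≤ n := hvalid
    have hn : n - L.sum + L.sum = n := by omega
    have hsizes := componentSizes_range_sdiff_markers (a := n - L.sum) (by omega) hL
    have hcard := card_range_sdiff_markers (a := n - L.sum) hL
    rw [hn] at hsizes hcard
    rw [hcorr, genIndices_image_genD fun m hm => hn ▸ lt_of_mem_markers hL hm]
    exact ⟨hsizes, hcard⟩
  | one | cn =>
    obtain ⟨rfl, hhead⟩ := hvalid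
    have hne : L ≠ [] := by
      rintro rfl
      simp at hhead
    simp only [corrD]
    rw [← image_genD_markers_zero hne, genIndices_image_genD hlt]
    exact hmarkers
  | cn' =>
    obtain ⟨rfl, hhead⟩ := hvalid
    have hn : 2 ≤ L.sum := by
      rcases L with _ | ⟨b, t⟩
      · simp at hhead
      · simp only [List.headI_cons, List.sum_cons] at hhead ⊢
        omega
    simp only [corrD]
    rw [← image_genD_markers_zero_swap hhead,
      genIndices_image_genD fun m hm => by
        obtain ⟨k, hk, rfl⟩ := mem_image.1 hm
        exact (swap_zero_one_lt_iff hn).2 (hlt k hk),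
      range_sdiff_image_swap_zero_one hn, componentSizes_image_swap_zero_one,
      card_image_of_injective _ (Equiv.swap 0 1).injective]
    exact hmarkers

theorem Multiset.eq_of_filter_ne_eq_of_card_eq {α : Type*} [DecidableEq α] {s u : Multiset α}
    {a : α} (h : s.filter (· ≠ a) = u.filter (· ≠ a)) (hc : card s = card u) : s = u := by
  have hdecomp (v : Multiset α) :
      v = v.filter (· ≠ a) + replicate (card v - card (v.filter (· ≠ a))) a := by
    conv_lhs => rw [← filter_add_not (· ≠ a) v]
    have hcard := congrArg card (filter_add_not (· ≠ a) v)
    rw [card_add] at hcard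
    congr 1
    rw [eq_replicate]
    refine ⟨by omega, fun b hb => ?_⟩
    simpa using (mem_filter.1 hb).2
  rw [hdecomp s, hdecomp u, h, hc]

theorem map_sub_one_map_add_one {N : List ℕ} (hN : ∀ x ∈ N, 0 < x) :
    (Multiset.map (· - 1) (N : Multiset ℕ)).map (· + 1) = N := by
  rw [Multiset.map_map]
  conv_rhs => rw [← Multiset.map_id (N : Multiset ℕ)]
  exact Multiset.map_congr rfl fun x hx => Nat.sub_add_cancel (hN x hx)

theorem perm_of_reducedParts_eq {L M : List ℕ} (hL : ∀ x ∈ L, 0 < x) (hM : ∀ x ∈ M, 0 < x)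
    (h : reducedParts L = reducedParts M) (hlen : L.length = M.length) : L.Perm M := by
  have hpred : Multiset.map (· - 1) (L : Multiset ℕ) = Multiset.map (· - 1) (M : Multiset ℕ) :=
    Multiset.eq_of_filter_ne_eq_of_card_eq h (by simp [hlen])
  rw [← Multiset.coe_eq_coe, ← map_sub_one_map_add_one hL, ← map_sub_one_map_add_one hM, hpred]

theorem stmt_2_general (n : ℕ) (J K : Set (Equiv.Perm ℤ))
    (hJ : J ⊆ genSetD n) (hK : K ⊆ genSetD n) (κ ν : CompD n)
    (hκ : corrD n κ = genSetD n \ J) (hν : corrD n ν = genSetD n \ K)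
    (h : ConjugateIn n J K) :
    κ.parts.Perm ν.parts := by
  obtain ⟨σ, -, hσ⟩ := h
  have hsizes := componentSizes_genIndices_eq_of_conj hJ hK hσ
  have hcard := card_genIndices_eq_of_conj hJ hK hσ
  rw [genIndices_eq_range_sdiff hκ, genIndices_eq_range_sdiff hν] at hsizes hcard
  obtain ⟨hκsizes, hκcard⟩ := componentSizes_range_sdiff_genIndices_corrD κ
  obtain ⟨hνsizes, hνcard⟩ := componentSizes_range_sdiff_genIndices_corrD ν
  refine perm_of_reducedParts_eq κ.pos ν.pos ?_ (by omega)
  rw [← hκsizes, ← hνsizes, hsizes]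

/-- If `J, K ⊆ S` are conjugate subsets, then the compositions `κ` and `ν`
corresponding to `S \ J` and `S \ K` have the same components: the components
of `κ` can be reordered to give the components of `ν`. -/
theorem stmt_2 (n : ℕ) (hn : 2 ≤ n) (J K : Set (Equiv.Perm ℤ))
    (hJ : J ⊆ genSetD n) (hK : K ⊆ genSetD n) (κ ν : CompD n)
    (hκ : corrD n κ = genSetD n \ J) (hν : corrD n ν = genSetD n \ K)
    (h : ConjugateIn n J K) :
    κ.parts.Perm ν.parts :=
  stmt_2_general n J K hJ hK κ ν hκ hν h
end

section
/- If κ, ν ∈ C(n) satisfy κ ≈ ν, then the subsets J, K ⊆ S whose complements J^c, K^c correspond to κ, ν respectively under the natural correspondence are conjugate in D_n: there exists σ ∈ D_n with σ⁻¹Jσ = K. -/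
/-!
Write the complement of the generators attached to `κ` as `genD '' κ.idx`. For a composition `p`,
`innerIdx p` consists of the indices `i < p.sum` that are not partial sums of `p`, i.e. the
generators of the type-`A` parabolic subgroup attached to `p`.

Exchanging two adjacent parts of `p` is realised by conjugating with the signed permutation that
exchanges the two corresponding blocks of positions. It fixes everything before those blocks,
hence also `s_{1'}` when the blocks come after the first part; this gives the conjugacy within
`C_{<n}` and within `C_1 ∪ C_n`. Negating `1` is an element of `B_n = signedPerm n` that
normalizes `D_n = evenSignedPerm n` and exchanges `s_1` with `s_{1'}`, which transports the
conjugacy to `C_n'`. Finally, if some part is odd then some partial sum `k` is odd, and negating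
`2, …, k` (an even number of sign changes, hence an element of `D_n`) exchanges `s_1` with
`s_{1'}` and fixes the other generators of the parabolic subgroup: this links `C_1 ∪ C_n` with
`C_n'`.
-/

open Equiv Finset

section SignedPerm

def signedPerm (n : ℕ) : Subgroup (Perm ℤ) where
  carrier := {σ | (∀ z, σ (-z) = -σ z) ∧ ∀ z, (n : ℤ) < |z| → σ z = z}
  mul_mem' {σ τ} hσ hτ :=
    ⟨fun z => by simp [hτ.1, hσ.1], fun z hz => by simp [hτ.2 z hz, hσ.2 z hz]⟩
  one_mem' := ⟨fun _ => rfl, fun _ _ => rfl⟩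
  inv_mem' {σ} hσ :=
    ⟨fun z => σ.injective (by simp [hσ.1]), fun z hz => σ.injective (by simp [hσ.2 z hz])⟩

variable {n : ℕ} {σ τ : Perm ℤ}

theorem apply_zero_of_odd (hσ : ∀ z, σ (-z) = -σ z) : σ 0 = 0 := by
  have := hσ 0
  rw [neg_zero] at this
  omega

theorem apply_ne_zero_of_odd (hσ : ∀ z, σ (-z) = -σ z) {z : ℤ} (hz : z ≠ 0) : σ z ≠ 0 :=
  fun h => hz (σ.injective (h.trans (apply_zero_of_odd hσ).symm))

theorem abs_inv_apply_abs_apply (hσ : ∀ z, σ (-z) = -σ z) (z : ℤ) : |σ⁻¹ (|σ z|)| = |z| := by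
  rcases abs_choice (σ z) with h | h
  · simp [h]
  · simp [h, ← hσ]

theorem abs_apply_mem_Icc (hσ : σ ∈ signedPerm n) {i : ℤ} (hi : i ∈ Icc 1 (n : ℤ)) :
    |σ i| ∈ Icc 1 (n : ℤ) := by
  rw [mem_Icc] at hi ⊢
  refine ⟨Int.one_le_abs (apply_ne_zero_of_odd hσ.1 (by omega)), not_lt.1 fun hlt => ?_⟩
  rw [σ.injective (hσ.2 _ hlt), abs_of_pos (by omega)] at hlt
  omega

noncomputable def signProd (n : ℕ) (σ : Perm ℤ) : ℤ := ∏ i ∈ Icc 1 (n : ℤ), (σ i).sign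

theorem sign_apply_of_odd (hσ : ∀ z, σ (-z) = -σ z) (z : ℤ) :
    (σ z).sign = z.sign * (σ |z|).sign := by
  rcases lt_trichotomy z 0 with h | rfl | h
  · rw [abs_of_neg h, hσ, Int.sign_neg, Int.sign_eq_neg_one_of_neg h, neg_one_mul, neg_neg]
  · simp [apply_zero_of_odd hσ]
  · rw [abs_of_pos h, Int.sign_eq_one_of_pos h, one_mul]

theorem signProd_mul (hσ : σ ∈ signedPerm n) (hτ : τ ∈ signedPerm n) :
    signProd n (σ * τ) = signProd n σ * signProd n τ := by
  have hτ' := (signedPerm n).inv_mem hτ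
  have hreindex : ∏ i ∈ Icc 1 (n : ℤ), (σ |τ i|).sign = signProd n σ :=
    prod_nbij' (fun i => |τ i|) (fun j => |τ⁻¹ j|) (fun _ => abs_apply_mem_Icc hτ)
      (fun _ => abs_apply_mem_Icc hτ')
      (fun i hi => by rw [abs_inv_apply_abs_apply hτ.1, abs_of_pos (by simp at hi; omega)])
      (fun j hj => by
        simpa [abs_of_pos (by simp at hj; omega : 0 < j)] using abs_inv_apply_abs_apply hτ'.1 j)
      (fun _ _ => rfl)
  simp only [signProd, Perm.mul_apply]
  rw [prod_congr rfl fun i _ => sign_apply_of_odd hσ.1 (τ i), prod_mul_distrib, hreindex, mul_comm]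
  rfl

theorem signProd_one : signProd n 1 = 1 :=
  prod_eq_one fun i hi => Int.sign_eq_one_of_pos (by simp at hi; simp; omega)

theorem isDn_iff : IsDn n σ ↔ σ ∈ signedPerm n ∧ signProd n σ = 1 := by
  refine and_assoc.symm.trans (and_congr_right fun hσ => ?_)
  have hsign : ∀ i ∈ Icc 1 (n : ℤ), (σ i).sign = if σ i < 0 then -1 else 1 := fun i hi => by
    have hne := apply_ne_zero_of_odd hσ.1 (by simp at hi; omega : i ≠ 0)
    split_ifs with h
    · exact Int.sign_eq_neg_one_of_neg h
    · exact Int.sign_eq_one_of_pos (by omega)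
  rw [signProd, prod_congr rfl hsign, prod_ite, prod_const, prod_const_one, mul_one,
    neg_one_pow_eq_one_iff_even (by decide)]

def evenSignedPerm (n : ℕ) : Subgroup (Perm ℤ) where
  carrier := {σ | IsDn n σ}
  mul_mem' {σ τ} hσ hτ := by
    obtain ⟨hσ, hσ1⟩ := isDn_iff.1 hσ
    obtain ⟨hτ, hτ1⟩ := isDn_iff.1 hτ
    exact isDn_iff.2 ⟨mul_mem hσ hτ, by rw [signProd_mul hσ hτ, hσ1, hτ1, one_mul]⟩
  one_mem' := isDn_iff.2 ⟨one_mem _, signProd_one⟩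
  inv_mem' {σ} hσ := by
    obtain ⟨hσ, hσ1⟩ := isDn_iff.1 hσ
    refine isDn_iff.2 ⟨inv_mem hσ, ?_⟩
    calc signProd n σ⁻¹ = signProd n σ⁻¹ * signProd n σ := by rw [hσ1, mul_one]
      _ = 1 := by rw [← signProd_mul (inv_mem hσ) hσ, inv_mul_cancel, signProd_one]

theorem inv_mul_mul_mem_evenSignedPerm (hτ : τ ∈ signedPerm n) (hσ : σ ∈ evenSignedPerm n) :
    τ⁻¹ * σ * τ ∈ evenSignedPerm n := by
  obtain ⟨hσ, hσ1⟩ := isDn_iff.1 hσ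
  have hτ' := inv_mem hτ
  refine isDn_iff.2 ⟨mul_mem (mul_mem hτ' hσ) hτ, ?_⟩
  rw [signProd_mul (mul_mem hτ' hσ) hτ, signProd_mul hτ' hσ, hσ1, mul_one,
    ← signProd_mul hτ' hτ, inv_mul_cancel, signProd_one]

def fixingEvenSignedPerm (n k : ℕ) : Subgroup (Perm ℤ) :=
  evenSignedPerm n ⊓ fixingSubgroup (Perm ℤ) (Set.Icc (-(k : ℤ)) k)

theorem fixingEvenSignedPerm_anti {k l : ℕ} (hkl : k ≤ l) :
    fixingEvenSignedPerm n l ≤ fixingEvenSignedPerm n k :=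
  inf_le_inf_left _ (fixingSubgroup_antitone (Perm ℤ) ℤ (Set.Icc_subset_Icc (by omega) (by omega)))

end SignedPerm

section ConjBy

variable {M : Type*} [Group M]

/-- `ConjugateIn n` is `ConjBy (evenSignedPerm n)` by unfolding. -/
def ConjBy (G : Subgroup M) (J K : Set M) : Prop :=
  ∃ σ ∈ G, (fun s => σ⁻¹ * s * σ) '' J = K

namespace ConjBy

variable {G H : Subgroup M} {J K L : Set M}

theorem refl (G : Subgroup M) (J : Set M) : ConjBy G J J := ⟨1, one_mem G, by simp⟩

theorem symm (h : ConjBy G J K) : ConjBy G K J := by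
  obtain ⟨σ, hσ, rfl⟩ := h
  exact ⟨σ⁻¹, inv_mem hσ, by simp [Set.image_image, mul_assoc]⟩

theorem trans (h₁ : ConjBy G J K) (h₂ : ConjBy G K L) : ConjBy G J L := by
  obtain ⟨σ, hσ, rfl⟩ := h₁
  obtain ⟨τ, hτ, rfl⟩ := h₂
  exact ⟨σ * τ, mul_mem hσ hτ, by simp [Set.image_image, mul_assoc]⟩

theorem mono (hGH : G ≤ H) (h : ConjBy G J K) : ConjBy H J K :=
  let ⟨σ, hσ, hJK⟩ := h
  ⟨σ, hGH hσ, hJK⟩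

theorem insert {g : M} (h : ConjBy G J K) (hg : ∀ σ ∈ G, σ⁻¹ * g * σ = g) :
    ConjBy G (insert g J) (insert g K) := by
  obtain ⟨σ, hσ, rfl⟩ := h
  exact ⟨σ, hσ, by rw [Set.image_insert_eq, hg σ hσ]⟩

theorem image_conj {g : M} (hg : ∀ σ ∈ G, g⁻¹ * σ * g ∈ G) (h : ConjBy G J K) :
    ConjBy G ((fun s => g⁻¹ * s * g) '' J) ((fun s => g⁻¹ * s * g) '' K) := by
  obtain ⟨σ, hσ, rfl⟩ := h
  exact ⟨g⁻¹ * σ * g, hg σ hσ, by simp [Set.image_image, mul_assoc]⟩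

end ConjBy

theorem image_conj_image {ι : Type*} (f : ι → M) {A : Set ι} (β : ι → ι) {τ : M}
    (h : ∀ i ∈ A, τ * f i * τ⁻¹ = f (β i)) :
    (fun s => τ * s * τ⁻¹) '' (f '' A) = f '' (β '' A) := by
  rw [Set.image_image, Set.image_image]
  exact Set.image_congr h

theorem conjBy_image_of_conj {ι : Type*} {G : Subgroup M} (f : ι → M) {A : Set ι} (β : ι → ι)
    {τ : M} (hτ : τ ∈ G) (h : ∀ i ∈ A, τ * f i * τ⁻¹ = f (β i)) :
    ConjBy G (f '' A) (f '' (β '' A)) :=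
  ⟨τ⁻¹, inv_mem hτ, by simpa only [inv_inv] using image_conj_image f β h⟩

end ConjBy

section Generators

def pairSwap (a b : ℤ) : Perm ℤ := swap a b * swap (-a) (-b)

theorem conj_pairSwap {τ : Perm ℤ} (hτ : ∀ z, τ (-z) = -τ z) (a b : ℤ) :
    τ * pairSwap a b * τ⁻¹ = pairSwap (τ a) (τ b) := by
  rw [pairSwap, pairSwap, ← hτ, ← hτ, swap_apply_apply, swap_apply_apply]
  group

theorem pairSwap_neg {a b : ℤ} (ha : a ≠ 0) (hb : b ≠ 0) : pairSwap (-a) (-b) = pairSwap a b := by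
  ext z
  simp only [pairSwap, Perm.mul_apply, swap_apply_def]
  split_ifs <;> omega

def edgeLo (i : ℕ) : ℤ := if i = 0 then -1 else i

def edgeHi (i : ℕ) : ℤ := if i = 0 then 2 else i + 1

theorem edgeLo_ne_zero (i : ℕ) : edgeLo i ≠ 0 := by
  unfold edgeLo
  split_ifs <;> omega

theorem edgeHi_ne_zero (i : ℕ) : edgeHi i ≠ 0 := by
  unfold edgeHi
  split_ifs <;> omega

theorem genD_eq_pairSwap (i : ℕ) : genD i = pairSwap (edgeLo i) (edgeHi i) := by
  ext z
  simp only [genD, edgeLo, edgeHi, pairSwap]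
  split_ifs <;> simp only [Perm.mul_apply, swap_apply_def] <;> split_ifs <;>
    first | omega | contradiction

theorem conj_genD {τ : Perm ℤ} (hτ : ∀ z, τ (-z) = -τ z) {i j : ℕ}
    (h : τ (edgeLo i) = edgeLo j ∧ τ (edgeHi i) = edgeHi j ∨
      τ (edgeLo i) = -edgeLo j ∧ τ (edgeHi i) = -edgeHi j) :
    τ * genD i * τ⁻¹ = genD j := by
  rw [genD_eq_pairSwap, genD_eq_pairSwap, conj_pairSwap hτ]
  rcases h with ⟨h₁, h₂⟩ | ⟨h₁, h₂⟩
  · rw [h₁, h₂]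
  · rw [h₁, h₂, pairSwap_neg (edgeLo_ne_zero j) (edgeHi_ne_zero j)]

theorem genD_apply_ne_succ {a b : ℕ} (ha : 1 ≤ a) (hab : b ≠ a) : genD b a ≠ a + 1 := by
  unfold genD
  split_ifs <;> simp only [Perm.mul_apply, swap_apply_def] <;> split_ifs <;> omega

theorem genD_injective_s4 : Function.Injective genD := by
  have key : ∀ a b : ℕ, 1 ≤ a → genD a = genD b → a = b := fun a b ha hab => by
    by_contra hne
    refine genD_apply_ne_succ ha (Ne.symm hne) ?_
    rw [← hab, genD_eq_pairSwap]
    simp only [edgeLo, edgeHi, pairSwap, Perm.mul_apply, swap_apply_def]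
    split_ifs <;> omega
  intro a b hab
  rcases Nat.eq_zero_or_pos a with rfl | ha
  · rcases Nat.eq_zero_or_pos b with rfl | hb
    · rfl
    · exact (key b 0 hb hab.symm).symm
  · exact key a b ha hab

end Generators

section Cuts

def cuts (p : List ℕ) : Set ℕ := Set.range fun j => (p.take j).sum

/-- `genD '' innerIdx p` generates the parabolic subgroup `S_{p₁} × ⋯ × S_{pₖ}`. -/
def innerIdx (p : List ℕ) : Set ℕ := Set.Iio p.sum \ cuts p

theorem cuts_nil : cuts [] = {0} := by
  ext
  simp [cuts]

theorem zero_mem_cuts (p : List ℕ) : 0 ∈ cuts p := ⟨0, rfl⟩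

theorem le_sum_of_mem_cuts {p : List ℕ} {c : ℕ} (h : c ∈ cuts p) : c ≤ p.sum := by
  obtain ⟨j, rfl⟩ := h
  exact (List.take_sublist j p).sum_le_sum fun _ _ => Nat.zero_le _

theorem mem_cuts_cons {a : ℕ} {l : List ℕ} {c : ℕ} :
    c ∈ cuts (a :: l) ↔ c = 0 ∨ ∃ d ∈ cuts l, c = a + d := by
  constructor
  · rintro ⟨_ | j, rfl⟩
    · simp
    · exact Or.inr ⟨_, ⟨j, rfl⟩, by simp⟩
  · rintro (rfl | ⟨d, ⟨j, rfl⟩, rfl⟩)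
    · exact zero_mem_cuts _
    · exact ⟨j + 1, by simp⟩

theorem mem_cuts_append {r l : List ℕ} {c : ℕ} :
    c ∈ cuts (r ++ l) ↔ c ∈ cuts r ∨ ∃ d ∈ cuts l, c = r.sum + d := by
  induction r generalizing c with
  | nil =>
    simp only [List.nil_append, cuts_nil, Set.mem_singleton_iff, List.sum_nil, zero_add]
    exact ⟨Or.inr ∘ (⟨c, ·, rfl⟩), by rintro (rfl | ⟨d, hd, rfl⟩) <;> simp [zero_mem_cuts, *]⟩
  | cons a r ih =>
    simp only [List.cons_append, mem_cuts_cons, ih, List.sum_cons]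
    constructor
    · rintro (rfl | ⟨d, hd | ⟨e, he, rfl⟩, rfl⟩)
      · exact Or.inl (Or.inl rfl)
      · exact Or.inl (Or.inr ⟨d, hd, rfl⟩)
      · exact Or.inr ⟨e, he, by omega⟩
    · rintro ((rfl | ⟨d, hd, rfl⟩) | ⟨e, he, rfl⟩)
      · exact Or.inl rfl
      · exact Or.inr ⟨d, Or.inl hd, rfl⟩
      · exact Or.inr ⟨r.sum + e, Or.inr ⟨e, he, rfl⟩, by omega⟩

theorem exists_odd_mem_cuts {p : List ℕ} (h : ∃ x ∈ p, Odd x) : ∃ k ∈ cuts p, Odd k := by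
  induction p with
  | nil => simp at h
  | cons a l ih =>
    by_cases ha : Odd a
    · exact ⟨a, mem_cuts_cons.2 (Or.inr ⟨0, zero_mem_cuts l, rfl⟩), ha⟩
    · obtain ⟨k, hk, hko⟩ := ih (by simpa [ha] using h)
      exact ⟨a + k, mem_cuts_cons.2 (Or.inr ⟨k, hk, rfl⟩), (Nat.not_odd_iff_even.1 ha).add_odd hko⟩

theorem headI_le_of_mem_cuts {q : List ℕ} {k : ℕ} (hk : k ∈ cuts q) (hk0 : k ≠ 0) :
    q.headI ≤ k := by
  cases q with
  | nil => exact absurd (by simpa [cuts_nil] using hk) hk0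
  | cons a l =>
    obtain rfl | ⟨d, -, rfl⟩ := mem_cuts_cons.1 hk
    · exact absurd rfl hk0
    · simp

theorem mem_innerIdx {p : List ℕ} {i : ℕ} : i ∈ innerIdx p ↔ i < p.sum ∧ i ∉ cuts p := Iff.rfl

theorem pos_of_mem_innerIdx {p : List ℕ} {i : ℕ} (h : i ∈ innerIdx p) : 0 < i :=
  Nat.pos_of_ne_zero fun h0 => h.2 (h0 ▸ zero_mem_cuts p)

theorem mem_innerIdx_append {r l : List ℕ} {i : ℕ} :
    i ∈ innerIdx (r ++ l) ↔ i ∈ innerIdx r ∨ ∃ d ∈ innerIdx l, i = r.sum + d := by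
  simp only [mem_innerIdx, mem_cuts_append, List.sum_append, not_or, not_exists, not_and]
  constructor
  · rintro ⟨hlt, hr, hl⟩
    by_cases his : i < r.sum
    · exact Or.inl ⟨his, hr⟩
    · exact Or.inr ⟨i - r.sum, ⟨by omega, fun hd => hl _ hd (by omega)⟩, by omega⟩
  · rintro (⟨hlt, hr⟩ | ⟨d, ⟨hd, hdl⟩, rfl⟩)
    · exact ⟨by omega, hr, fun d _ h => by omega⟩
    · refine ⟨by omega, fun hr => hdl ?_, fun e he h => hdl (by rwa [Nat.add_left_cancel h])⟩
      obtain rfl : d = 0 := by have := le_sum_of_mem_cuts hr; omega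
      exact zero_mem_cuts l

theorem mem_innerIdx_append_singleton {r : List ℕ} {a i : ℕ} :
    i ∈ innerIdx (r ++ [a]) ↔ i ∈ innerIdx r ∨ (r.sum < i ∧ i < r.sum + a) := by
  rw [mem_innerIdx_append, or_congr_right]
  simp only [mem_innerIdx, List.sum_singleton, mem_cuts_cons, cuts_nil, Set.mem_singleton_iff]
  constructor
  · rintro ⟨d, ⟨hd, hd0⟩, rfl⟩
    omega
  · exact fun h => ⟨i - r.sum, ⟨by omega, by omega⟩, by omega⟩

theorem mem_innerIdx_append_cons_cons {r t : List ℕ} {x y i : ℕ} :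
    i ∈ innerIdx (r ++ x :: y :: t) ↔ i ∈ innerIdx r ∨ (r.sum < i ∧ i < r.sum + x) ∨
      (r.sum + x < i ∧ i < r.sum + x + y) ∨ ∃ d ∈ innerIdx t, i = r.sum + x + y + d := by
  rw [show r ++ x :: y :: t = r ++ [x] ++ [y] ++ t by simp, mem_innerIdx_append,
    mem_innerIdx_append_singleton, mem_innerIdx_append_singleton]
  simp only [List.sum_append, List.sum_singleton, or_assoc]

end Cuts

section BlockSwap

/-- Exchanges the blocks `(s, s + x]` and `(s + x, s + x + y]`, keeping the order inside each. -/
def blockSwapNat (s x y i : ℕ) : ℕ :=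
  if s < i ∧ i ≤ s + x then i + y else if s + x < i ∧ i ≤ s + x + y then i - x else i

theorem blockSwapNat_blockSwapNat (s x y i : ℕ) :
    blockSwapNat s y x (blockSwapNat s x y i) = i := by
  unfold blockSwapNat
  split_ifs <;> omega

/-- The odd extension of `blockSwapNat s x y` to `ℤ`. -/
def blockSwapFun (s x y : ℕ) (z : ℤ) : ℤ :=
  if (s : ℤ) < z ∧ z ≤ s + x then z + y
  else if (s : ℤ) + x < z ∧ z ≤ s + x + y then z - x
  else if (s : ℤ) < -z ∧ -z ≤ s + x then z - y
  else if (s : ℤ) + x < -z ∧ -z ≤ s + x + y then z + x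
  else z

theorem blockSwapFun_blockSwapFun (s x y : ℕ) (z : ℤ) :
    blockSwapFun s y x (blockSwapFun s x y z) = z := by
  unfold blockSwapFun
  split_ifs <;> omega

def blockSwap (s x y : ℕ) : Perm ℤ where
  toFun := blockSwapFun s x y
  invFun := blockSwapFun s y x
  left_inv := blockSwapFun_blockSwapFun s x y
  right_inv := blockSwapFun_blockSwapFun s y x

variable {s x y : ℕ}

theorem blockSwap_apply_neg (z : ℤ) : blockSwap s x y (-z) = -blockSwap s x y z := by
  change blockSwapFun s x y (-z) = -blockSwapFun s x y z
  unfold blockSwapFun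
  split_ifs <;> omega

theorem blockSwap_natCast (i : ℕ) : blockSwap s x y i = blockSwapNat s x y i := by
  change blockSwapFun s x y i = _
  unfold blockSwapFun blockSwapNat
  split_ifs <;> omega

theorem blockSwap_mem {n : ℕ} (h : s + x + y ≤ n) : blockSwap s x y ∈ fixingEvenSignedPerm n s := by
  have hfix : ∀ z : ℤ, (z.natAbs ≤ s ∨ s + x + y < z.natAbs) → blockSwap s x y z = z :=
    fun z hz => by
      change blockSwapFun s x y z = z
      unfold blockSwapFun
      split_ifs <;> omega
  have hpos : ∀ i ∈ Finset.Icc (1 : ℤ) n, ¬blockSwap s x y i < 0 := fun i hi => by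
    simp only [Finset.mem_Icc] at hi
    lift i to ℕ using (by omega)
    rw [blockSwap_natCast]
    omega
  refine ⟨⟨blockSwap_apply_neg, fun z hz => hfix z (Or.inr ?_), ?_⟩,
    (mem_fixingSubgroup_iff _).2 fun z hz => hfix z (Or.inl ?_)⟩
  · rw [Int.abs_eq_natAbs] at hz
    omega
  · rw [Finset.filter_false_of_mem hpos, Finset.card_empty]
    exact ⟨0, rfl⟩
  · rw [Set.mem_Icc] at hz
    omega

theorem mapsTo_blockSwapNat_innerIdx (r t : List ℕ) (x y : ℕ) :
    Set.MapsTo (blockSwapNat r.sum x y) (innerIdx (r ++ x :: y :: t))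
      (innerIdx (r ++ y :: x :: t)) := by
  intro i hi
  rw [mem_innerIdx_append_cons_cons] at hi ⊢
  rcases hi with hr | hi | hi | ⟨d, hd, rfl⟩
  · have := (mem_innerIdx.1 hr).1
    rw [blockSwapNat, if_neg (by omega), if_neg (by omega)]
    exact Or.inl hr
  · rw [blockSwapNat, if_pos (by omega)]
    exact Or.inr (Or.inr (Or.inl (by omega)))
  · rw [blockSwapNat, if_neg (by omega), if_pos (by omega)]
    exact Or.inr (Or.inl (by omega))
  · have := pos_of_mem_innerIdx hd
    rw [blockSwapNat, if_neg (by omega), if_neg (by omega)]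
    exact Or.inr (Or.inr (Or.inr ⟨d, hd, by omega⟩))

theorem image_blockSwapNat_innerIdx (r t : List ℕ) (x y : ℕ) :
    blockSwapNat r.sum x y '' innerIdx (r ++ x :: y :: t) = innerIdx (r ++ y :: x :: t) :=
  (Set.InvOn.bijOn ⟨fun i _ => blockSwapNat_blockSwapNat _ _ _ i,
    fun i _ => blockSwapNat_blockSwapNat _ _ _ i⟩ (mapsTo_blockSwapNat_innerIdx r t x y)
    (mapsTo_blockSwapNat_innerIdx r t y x)).image_eq

theorem conjBy_innerIdx_append_swap {n : ℕ} (r t : List ℕ) (x y : ℕ)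
    (hn : (r ++ x :: y :: t).sum ≤ n) :
    ConjBy (fixingEvenSignedPerm n r.sum) (genD '' innerIdx (r ++ x :: y :: t))
      (genD '' innerIdx (r ++ y :: x :: t)) := by
  rw [← image_blockSwapNat_innerIdx r t x y]
  have hsum : r.sum + x + y ≤ n := by
    simp only [List.sum_append, List.sum_cons] at hn
    omega
  refine conjBy_image_of_conj genD _ (blockSwap_mem hsum) fun i hi =>
    conj_genD blockSwap_apply_neg (Or.inl ?_)
  have hi0 := pos_of_mem_innerIdx hi
  have hblock : i + 1 ≤ r.sum ∨ (r.sum < i ∧ i < r.sum + x) ∨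
      (r.sum + x < i ∧ i < r.sum + x + y) ∨ r.sum + x + y < i := by
    rcases mem_innerIdx_append_cons_cons.1 hi with hr | h | h | ⟨d, hd, rfl⟩
    · exact Or.inl (mem_innerIdx.1 hr).1
    · exact Or.inr (Or.inl h)
    · exact Or.inr (Or.inr (Or.inl h))
    · exact Or.inr (Or.inr (Or.inr (by have := pos_of_mem_innerIdx hd; omega)))
  have hβ : 0 < blockSwapNat r.sum x y i := by unfold blockSwapNat; split_ifs <;> omega
  simp only [edgeLo, edgeHi, if_neg hi0.ne', if_neg hβ.ne']
  rw [blockSwap_natCast, show (i : ℤ) + 1 = ((i + 1 : ℕ) : ℤ) by push_cast; rfl, blockSwap_natCast]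
  unfold blockSwapNat
  constructor <;> split_ifs <;> omega

theorem conjBy_innerIdx_append_of_perm {n : ℕ} {p q : List ℕ} (hpq : p.Perm q) (r : List ℕ)
    (hn : (r ++ p).sum ≤ n) :
    ConjBy (fixingEvenSignedPerm n r.sum) (genD '' innerIdx (r ++ p))
      (genD '' innerIdx (r ++ q)) := by
  induction hpq generalizing r with
  | nil => exact ConjBy.refl _ _
  | cons z _ ih =>
    simpa using (ih (r ++ [z]) (by simpa using hn)).mono (fixingEvenSignedPerm_anti (by simp))
  | swap x y t => exact conjBy_innerIdx_append_swap r t y x hn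
  | trans h₁₂ _ ih₁ ih₂ =>
    refine (ih₁ r hn).trans (ih₂ r ?_)
    rwa [List.sum_append, ← h₁₂.sum_eq, ← List.sum_append]

theorem conjBy_innerIdx_of_perm {n : ℕ} {p q : List ℕ} (hpq : p.Perm q) (hn : p.sum ≤ n) :
    ConjBy (evenSignedPerm n) (genD '' innerIdx p) (genD '' innerIdx q) :=
  (conjBy_innerIdx_append_of_perm hpq [] hn).mono inf_le_left

theorem inv_mul_genD_zero_mul {n k : ℕ} (hk : 2 ≤ k) {σ : Perm ℤ}
    (hσ : σ ∈ fixingEvenSignedPerm n k) : σ⁻¹ * genD 0 * σ = genD 0 := by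
  have hσ' := inv_mem hσ
  have hfix : ∀ z : ℤ, -2 ≤ z → z ≤ 2 → σ⁻¹ z = z := fun z h₁ h₂ =>
    (mem_fixingSubgroup_iff _).1 hσ'.2 z ⟨by omega, by omega⟩
  simpa using conj_genD hσ'.1.1 (i := 0) (j := 0)
    (Or.inl ⟨hfix _ (by simp [edgeLo]) (by simp [edgeLo]), hfix _ (by simp [edgeHi]) (by simp [edgeHi])⟩)

theorem conjBy_insert_zero_innerIdx_of_perm {n m : ℕ} {p q : List ℕ} (hpq : p.Perm q)
    (hm : 2 ≤ m) (hn : m + p.sum ≤ n) :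
    ConjBy (evenSignedPerm n) (genD '' insert 0 (innerIdx (m :: p)))
      (genD '' insert 0 (innerIdx (m :: q))) := by
  rw [Set.image_insert_eq, Set.image_insert_eq]
  exact ((conjBy_innerIdx_append_of_perm hpq [m] (by simpa using hn)).insert
    fun σ hσ => inv_mul_genD_zero_mul (by simpa using hm) hσ).mono inf_le_left

end BlockSwap

section SignFlip

def signFlip (a b : ℕ) : Perm ℤ :=
  Function.Involutive.toPerm (fun z => if a ≤ z.natAbs ∧ z.natAbs ≤ b then -z else z)
    fun z => by dsimp only; split_ifs <;> omega

variable {a b n : ℕ}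

theorem signFlip_apply (z : ℤ) :
    signFlip a b z = if a ≤ z.natAbs ∧ z.natAbs ≤ b then -z else z := rfl

theorem signFlip_apply_neg (z : ℤ) : signFlip a b (-z) = -signFlip a b z := by
  simp only [signFlip_apply, Int.natAbs_neg]
  split_ifs <;> omega

theorem signFlip_mem_signedPerm (hb : b ≤ n) : signFlip a b ∈ signedPerm n :=
  ⟨signFlip_apply_neg, fun z hz => by
    rw [Int.abs_eq_natAbs] at hz
    rw [signFlip_apply, if_neg (by omega)]⟩

theorem signFlip_mem_evenSignedPerm (ha : 1 ≤ a) (hb : b ≤ n) (he : Even (b + 1 - a)) :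
    signFlip a b ∈ evenSignedPerm n := by
  refine ⟨signFlip_apply_neg, (signFlip_mem_signedPerm hb).2, ?_⟩
  have hfilter : (Finset.Icc (1 : ℤ) n).filter (fun i => signFlip a b i < 0) =
      Finset.Icc (a : ℤ) b := by
    ext i
    rw [Finset.mem_filter]
    simp only [Finset.mem_Icc, signFlip_apply]
    split_ifs <;> omega
  rwa [hfilter, Int.card_Icc, show ((b : ℤ) + 1 - a).toNat = b + 1 - a by omega]

theorem conj_signFlip_one_one (i : ℕ) :
    signFlip 1 1 * genD i * (signFlip 1 1)⁻¹ = genD (swap 0 1 i) := by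
  apply conj_genD signFlip_apply_neg
  simp only [edgeLo, edgeHi, signFlip_apply, swap_apply_def]
  split_ifs <;> first | omega | contradiction

theorem conj_signFlip_two {k i : ℕ} (hk : 2 ≤ k) (hi0 : i ≠ 0) (hik : i ≠ k) :
    signFlip 2 k * genD i * (signFlip 2 k)⁻¹ = genD (swap 0 1 i) := by
  apply conj_genD signFlip_apply_neg
  simp only [edgeLo, edgeHi, signFlip_apply, swap_apply_def]
  split_ifs <;> omega

/-- The conjugator is `signFlip 2 k` for an odd partial sum `k`, with `k - 1` sign changes. -/
theorem conjBy_innerIdx_swap_zero_one {q : List ℕ} (hq : 2 ≤ q.headI)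
    (hodd : ∃ x ∈ q, Odd x) (hn : q.sum = n) :
    ConjBy (evenSignedPerm n) (genD '' innerIdx q) (genD '' (swap 0 1 '' innerIdx q)) := by
  obtain ⟨k, hk, hko⟩ := exists_odd_mem_cuts hodd
  have hk2 : 2 ≤ k := hq.trans (headI_le_of_mem_cuts hk (by rintro rfl; simp at hko))
  have hkn : k ≤ n := hn ▸ le_sum_of_mem_cuts hk
  have heven : Even (k + 1 - 2) := by
    obtain ⟨m, rfl⟩ := hko
    exact ⟨m, by omega⟩
  exact conjBy_image_of_conj genD _ (signFlip_mem_evenSignedPerm (by omega) hkn heven)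
    fun i hi => conj_signFlip_two hk2 (pos_of_mem_innerIdx hi).ne' fun h => hi.2 (h ▸ hk)

theorem conjBy_innerIdx_swap_zero_one_of_perm {p q : List ℕ} (hpq : p.Perm q)
    (hq : 2 ≤ q.headI) (hodd : ∃ x ∈ p, Odd x) (hn : p.sum = n) :
    ConjBy (evenSignedPerm n) (genD '' innerIdx p) (genD '' (swap 0 1 '' innerIdx q)) :=
  let ⟨x, hx, hxo⟩ := hodd
  (conjBy_innerIdx_of_perm hpq hn.le).trans
    (conjBy_innerIdx_swap_zero_one hq ⟨x, hpq.subset hx, hxo⟩ (hpq.sum_eq ▸ hn))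

/-- Conjugation by `signFlip 1 1 ∈ B_n`, which normalizes `D_n`, exchanges `s_1` and `s_{1'}`. -/
theorem ConjBy.image_swap_zero_one (hn : 1 ≤ n) {A B : Set ℕ}
    (h : ConjBy (evenSignedPerm n) (genD '' A) (genD '' B)) :
    ConjBy (evenSignedPerm n) (genD '' (swap 0 1 '' A)) (genD '' (swap 0 1 '' B)) := by
  have hε := inv_mem (signFlip_mem_signedPerm (a := 1) hn)
  have := h.image_conj fun σ hσ => inv_mul_mul_mem_evenSignedPerm hε hσ
  simp only [inv_inv] at this
  rwa [image_conj_image genD _ fun i _ => conj_signFlip_one_one i,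
    image_conj_image genD _ fun i _ => conj_signFlip_one_one i] at this

end SignFlip

section Correspondence

theorem exists_odd_of_headI_eq_one {l : List ℕ} (h : l.headI = 1) : ∃ x ∈ l, Odd x :=
  ⟨1, by cases l <;> simp_all, odd_one⟩

theorem sum_eq_zero_iff_of_pos {l : List ℕ} (hl : ∀ x ∈ l, 0 < x) : l.sum = 0 ↔ l = [] :=
  ⟨fun h => List.eq_nil_iff_forall_not_mem.2 fun x hx =>
    (hl x hx).ne' (List.sum_eq_zero_iff.1 h x hx), fun h => h ▸ rfl⟩

theorem setOf_take_sum_eq {q : List ℕ} (hq : ∀ x ∈ q, 0 < x) :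
    {c | ∃ j, 1 ≤ j ∧ j < q.length ∧ c = (q.take j).sum} =
      {c | c ∈ cuts q ∧ 0 < c ∧ c < q.sum} := by
  have htake : ∀ j, (q.take j).sum = 0 ↔ j = 0 ∨ q = [] := fun j =>
    (sum_eq_zero_iff_of_pos fun x hx => hq x (List.mem_of_mem_take hx)).trans List.take_eq_nil_iff
  have hdrop : ∀ j, (q.drop j).sum = 0 ↔ q.length ≤ j := fun j =>
    (sum_eq_zero_iff_of_pos fun x hx => hq x (List.mem_of_mem_drop hx)).trans List.drop_eq_nil_iff
  ext c
  constructor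
  · rintro ⟨j, hj, hjq, rfl⟩
    have h₁ := (htake j).not.2 (by rintro (h | rfl) <;> simp_all)
    have h₂ := (hdrop j).not.2 (by omega)
    have := List.sum_take_add_sum_drop q j
    exact ⟨⟨j, rfl⟩, by omega, by omega⟩
  · rintro ⟨⟨j, rfl⟩, h₀, hlt⟩
    dsimp only at h₀ hlt
    refine ⟨j, Nat.one_le_iff_ne_zero.2 fun hj => h₀.ne' ((htake j).2 (Or.inl hj)), ?_, rfl⟩
    by_contra hj
    have := (hdrop j).2 (by omega)
    have := List.sum_take_add_sum_drop q j
    omega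

theorem Iio_diff_insert_zero (q : List ℕ) :
    Set.Iio q.sum \ insert 0 {c | c ∈ cuts q ∧ 0 < c ∧ c < q.sum} = innerIdx q := by
  ext i
  have := zero_mem_cuts q
  simp only [Set.mem_sdiff, Set.mem_Iio, Set.mem_insert_iff, Set.mem_ofPred_eq, mem_innerIdx]
  constructor
  · rintro ⟨hi, hne⟩
    exact ⟨hi, fun hc => hne (Or.inr ⟨hc, Nat.pos_of_ne_zero fun h => hne (Or.inl h), hi⟩)⟩
  · rintro ⟨hi, hc⟩
    exact ⟨hi, by rintro (rfl | ⟨h, -⟩) <;> contradiction⟩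

theorem Iio_diff_eq_insert_zero {q : List ℕ} (hq : 0 < q.sum) :
    Set.Iio q.sum \ {c | c ∈ cuts q ∧ 0 < c ∧ c < q.sum} = insert 0 (innerIdx q) := by
  ext i
  simp only [Set.mem_sdiff, Set.mem_Iio, Set.mem_insert_iff, Set.mem_ofPred_eq, mem_innerIdx]
  rcases Nat.eq_zero_or_pos i with rfl | hi
  · simp [hq]
  · simp only [hi.ne', false_or]
    exact ⟨fun ⟨hlt, h⟩ => ⟨hlt, fun hc => h ⟨hc, hi, hlt⟩⟩, fun ⟨hlt, hc⟩ => ⟨hlt, fun h => hc h.1⟩⟩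

theorem Iio_diff_insert_one {q : List ℕ} (hq : 2 ≤ q.headI) :
    Set.Iio q.sum \ insert 1 {c | c ∈ cuts q ∧ 0 < c ∧ c < q.sum} = swap 0 1 '' innerIdx q := by
  rw [Equiv.image_eq_preimage_symm, symm_swap]
  ext i
  have h₀ := zero_mem_cuts q
  have h₁ : 1 ∉ cuts q := fun h => by have := headI_le_of_mem_cuts h one_ne_zero; omega
  have h₂ := List.headI_le_sum q
  simp only [Set.mem_sdiff, Set.mem_Iio, Set.mem_insert_iff, Set.mem_ofPred_eq, Set.mem_preimage,
    mem_innerIdx]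
  rcases i with _ | _ | i
  · simp [h₁]
    omega
  · simp [h₀]
  · rw [swap_apply_of_ne_of_ne (by omega) (by omega)]
    constructor
    · exact fun ⟨hi, hc⟩ => ⟨hi, fun h => hc (Or.inr ⟨h, by omega, hi⟩)⟩
    · exact fun ⟨hi, hc⟩ => ⟨hi, by rintro (h | ⟨h, -⟩) <;> [omega; exact hc h]⟩

theorem genSetD_diff_image (n : ℕ) (X : Set ℕ) :
    genSetD n \ genD '' X = genD '' (Set.Iio n \ X) := by
  rw [Set.image_sdiff genD_injective_s4]
  congr 1
  ext g
  simp [genSetD, eq_comm]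

theorem genSetD_diff_corrD_of_sum_eq {n : ℕ} {p : List ℕ} (hp : ∀ x ∈ p, 0 < x) (a : ℕ) :
    genSetD n \ ({genD a} ∪ {g | ∃ j, 1 ≤ j ∧ j < p.length ∧ g = genD ((p.take j).sum)}) =
      genD '' (Set.Iio n \ insert a {c | c ∈ cuts p ∧ 0 < c ∧ c < p.sum}) := by
  rw [← setOf_take_sum_eq hp, ← genSetD_diff_image, Set.image_insert_eq, Set.insert_eq]
  congr 3
  ext g
  simp [eq_comm, and_assoc]

theorem genSetD_diff_corrD_of_sum_lt {n : ℕ} {p : List ℕ} (hp : ∀ x ∈ p, 0 < x)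
    (hn : p.sum + 2 ≤ n) :
    genSetD n \ {g | ∃ j < p.length, g = genD (n - p.sum + (p.take j).sum)} =
      genD '' insert 0 (innerIdx ((n - p.sum) :: p)) := by
  have hq : ∀ x ∈ (n - p.sum) :: p, 0 < x := by simpa using ⟨by omega, hp⟩
  have hsum : ((n - p.sum) :: p).sum = n := by simp; omega
  rw [← Iio_diff_eq_insert_zero (by omega), ← setOf_take_sum_eq hq, hsum, ← genSetD_diff_image]
  congr 2
  ext g
  simp only [Set.mem_ofPred_eq, List.length_cons]
  constructor
  · rintro ⟨j, hj, rfl⟩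
    exact ⟨_, ⟨j + 1, by omega, by omega, rfl⟩, by simp⟩
  · rintro ⟨_, ⟨_ | j, hj, hjl, rfl⟩, rfl⟩
    · omega
    · exact ⟨j, by omega, by simp⟩

def CompD.idx {n : ℕ} (κ : CompD n) : Set ℕ :=
  match κ.tag with
  | CTag.lt => insert 0 (innerIdx ((n - κ.parts.sum) :: κ.parts))
  | CTag.one => innerIdx κ.parts
  | CTag.cn => innerIdx κ.parts
  | CTag.cn' => swap 0 1 '' innerIdx κ.parts

theorem genSetD_diff_corrD {n : ℕ} (κ : CompD n) : genSetD n \ corrD n κ = genD '' κ.idx := by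
  obtain ⟨t, p, hp, hv⟩ := κ
  cases t
  · exact genSetD_diff_corrD_of_sum_lt hp hv
  all_goals
    simp only [corrD, CompD.idx]
    rw [genSetD_diff_corrD_of_sum_eq hp, ← hv.1]
  · rw [Iio_diff_insert_zero]
  · rw [Iio_diff_insert_zero]
  · rw [Iio_diff_insert_one hv.2]

theorem CompD.conjBy_idx_of_approxD {n : ℕ} {κ ν : CompD n} (h : approxD κ ν) :
    ConjBy (evenSignedPerm n) (genD '' κ.idx) (genD '' ν.idx) := by
  obtain ⟨tκ, p, hp, hvp⟩ := κ
  obtain ⟨tν, q, _, hvq⟩ := ν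
  obtain ⟨hpq, hexc⟩ := h
  have hsum : p.sum = q.sum := hpq.sum_eq
  cases tκ <;> cases tν <;> dsimp only [CompD.idx] at hvp hvq hexc ⊢
  · rw [← hsum]
    exact conjBy_insert_zero_innerIdx_of_perm hpq (by omega) (by omega)
  any_goals (exfalso; omega)
  any_goals exact conjBy_innerIdx_of_perm hpq hvp.1.le
  · exact conjBy_innerIdx_swap_zero_one_of_perm hpq hvq.2 (exists_odd_of_headI_eq_one hvp.2) hvp.1
  · exact conjBy_innerIdx_swap_zero_one_of_perm hpq hvq.2 (by simpa using hexc) hvp.1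
  · exact (conjBy_innerIdx_swap_zero_one_of_perm hpq.symm hvp.2
      (exists_odd_of_headI_eq_one hvq.2) hvq.1).symm
  · obtain ⟨x, hx, hxo⟩ : ∃ x ∈ p, Odd x := by simpa using hexc
    exact (conjBy_innerIdx_swap_zero_one_of_perm hpq.symm hvp.2 ⟨x, hpq.subset hx, hxo⟩
      hvq.1).symm
  · exact (conjBy_innerIdx_of_perm hpq hvp.1.le).image_swap_zero_one
      (by have := List.headI_le_sum p; omega)

end Correspondence

theorem stmt_4_general (n : ℕ) (κ ν : CompD n) (h : approxD κ ν)
    (J K : Set (Equiv.Perm ℤ)) (hJ : J ⊆ genSetD n) (hK : K ⊆ genSetD n)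
    (hκ : corrD n κ = genSetD n \ J) (hν : corrD n ν = genSetD n \ K) :
    ConjugateIn n J K := by
  rw [← Set.sdiff_sdiff_cancel_left hJ, ← Set.sdiff_sdiff_cancel_left hK, ← hκ, ← hν,
    genSetD_diff_corrD, genSetD_diff_corrD]
  exact CompD.conjBy_idx_of_approxD h

/-- If `κ, ν ∈ C(n)` satisfy `κ ≈ ν`, then the subsets `J, K ⊆ S` whose
complements correspond to `κ, ν` under the natural correspondence are conjugate
in `D_n`. -/
theorem stmt_4 (n : ℕ) (hn : 2 ≤ n) (κ ν : CompD n) (h : approxD κ ν)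
    (J K : Set (Equiv.Perm ℤ)) (hJ : J ⊆ genSetD n) (hK : K ⊆ genSetD n)
    (hκ : corrD n κ = genSetD n \ J) (hν : corrD n ν = genSetD n \ K) :
    ConjugateIn n J K :=
  stmt_4_general n κ ν h J K hJ hK hκ hν
end

section
/- For compositions κ = [κ_1,…,κ_k] and ν = [ν_1,…,ν_l] of n, the product in the descent algebra of the symmetric group satisfies B_κ B_ν = Σ_z B_{r(z)}, where the sum is over all l × k matrices z = (z_{ij}) with non-negative integer entries satisfying (1) Σ_i z_{ij} = κ_j for each column j and (2) Σ_j z_{ij} = ν_i for each row i, and r(z) is the composition of n obtained by reading the non-zero entries of z row by row, left to right within each row. -/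
/-- The right action of a permutation `σ ∈ S_n` on a word of length `n` in the free
monoid: `(a_1 ⋯ a_n) · σ = a_{σ(1)} ⋯ a_{σ(n)}` (words of other lengths are fixed). -/
def wordAct {A : Type*} (n : ℕ) (w : FreeMonoid A) (σ : Equiv.Perm (Fin n)) :
    FreeMonoid A :=
  if h : (FreeMonoid.toList w).length = n then
    FreeMonoid.ofList (List.ofFn fun j : Fin n => (FreeMonoid.toList w).get (Fin.cast h.symm (σ j)))
  else w

/-- The bilinear extension of the word action: the right action of the group algebra
`ℚ[S_n]` on the free associative algebra `F = ℚ⟨A⟩` (realized as the monoid algebra of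
the free monoid on `A`), correct on the homogeneous component of degree `n`. -/
noncomputable def permAct {A : Type*} (n : ℕ) (P : MonoidAlgebra ℚ (FreeMonoid A))
    (q : MonoidAlgebra ℚ (Equiv.Perm (Fin n))) : MonoidAlgebra ℚ (FreeMonoid A) :=
  Finsupp.sum P.coeff fun w c => Finsupp.sum q.coeff fun σ d =>
    MonoidAlgebra.single (wordAct n w σ) (c * d)

attribute [local instance 100] LieRing.ofAssociativeRing

/-- The free Lie algebra `L(A)`: the Lie subalgebra of the free associative algebra
(with bracket `[P,Q] = PQ - QP`) generated by the letters of `A`. -/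
noncomputable def freeLieD (A : Type*) :
    LieSubalgebra ℚ (MonoidAlgebra ℚ (FreeMonoid A)) :=
  LieSubalgebra.lieSpan ℚ _ {x | ∃ a : A, x = MonoidAlgebra.single (FreeMonoid.of a) 1}

/-- The descent set of `σ ∈ S_n` (1-indexed): the set of `i ∈ {1,…,n-1}` with
`σ(i) > σ(i+1)`. -/
def descentSetS {n : ℕ} (σ : Equiv.Perm (Fin n)) : Set ℕ :=
  {i | ∃ (_ : 1 ≤ i) (h2 : i < n),
    ((σ ⟨i, h2⟩ : Fin n) : ℕ) < ((σ ⟨i - 1, Nat.lt_of_le_of_lt (Nat.sub_le i 1) h2⟩ : Fin n) : ℕ)}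

/-- The set of proper partial sums `{ν_1, ν_1+ν_2, …, ν_1+⋯+ν_{l-1}}` of a
composition `ν = [ν_1,…,ν_l]`. -/
def partialSumsS (ν : List ℕ) : Set ℕ :=
  {s | ∃ j, 1 ≤ j ∧ j < ν.length ∧ s = (ν.take j).sum}

/-- `B_ν ∈ ℚ[S_n]`: the sum of all permutations whose descent set is contained in
the set of proper partial sums of `ν`. -/
noncomputable def BS (n : ℕ) (ν : List ℕ) : MonoidAlgebra ℚ (Equiv.Perm (Fin n)) :=
  ∑ᶠ σ ∈ {σ : Equiv.Perm (Fin n) | descentSetS σ ⊆ partialSumsS ν},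
    MonoidAlgebra.single σ (1 : ℚ)

/-- The composition `r(z)` obtained by reading the non-zero entries of the matrix `z`
row by row, left to right within each row. -/
def readM {l k : ℕ} (z : Fin l → Fin k → ℕ) : List ℕ :=
  (List.ofFn fun i : Fin l => (List.ofFn fun j : Fin k => z i j).filter fun x => x ≠ 0).flatten


/-
`B_κ B_ν` is the sum of `στ` over the pairs with `σ` increasing on the parts of `κ` and `τ`
increasing on the parts of `ν` (a descent set lies in the partial sums of a composition iff the
permutation increases on each part). Record such a pair as the matrix `z`, where `z i j` counts the
positions of the `i`-th part of `ν` that `τ` sends into the `j`-th part of `κ`, together with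
`π = στ`. Then `π` increases on the cells of `z`, which are the parts of `r(z)` (zero parts do not
change the partial sums), and `(σ, τ) ↦ (z, π)` is a bijection onto such pairs: `τ⁻¹` is recovered
by sorting the positions lexicographically by the column of their cell and their image under `π`.
-/

namespace DescentAlgebra

open Finset Equiv

lemma mul_add_eq_mul_add_iff {k a b c d : ℕ} (hb : b < k) (hd : d < k) :
    k * a + b = k * c + d ↔ a = c ∧ b = d := by
  refine ⟨fun h => ?_, fun h => by rw [h.1, h.2]⟩
  have hk : 0 < k := by omega
  have hdiv := congrArg (· / k) h
  have hmod := congrArg (· % k) h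
  simp only [Nat.mul_add_div hk, Nat.div_eq_of_lt hb, Nat.div_eq_of_lt hd, Nat.mul_add_mod,
    Nat.mod_eq_of_lt hb, Nat.mod_eq_of_lt hd, add_zero] at hdiv hmod
  exact ⟨hdiv, hmod⟩

section Counting

variable {α : Type*} {s : Finset α} {g : α → ℕ} {k : ℕ}

lemma sum_card_fiberwise_lt (hg : ∀ a ∈ s, g a < k) (j : ℕ) :
    ∑ j' : Fin k with j'.val < j, #{a ∈ s | g a = j'} = #{a ∈ s | g a < j} := by
  rw [card_eq_sum_card_fiberwise (f := g)
    (t := map Fin.valEmbedding ({j' : Fin k | j'.val < j} : Finset (Fin k))), sum_map]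
  · refine sum_congr rfl fun j' hj' => ?_
    rw [mem_filter] at hj'
    rw [filter_filter]
    exact congrArg card (filter_congr fun a _ => by simp only [Fin.valEmbedding_apply]; omega)
  · intro a ha
    rw [coe_filter] at ha
    simpa using ⟨⟨g a, hg a ha.1⟩, ha.2, rfl⟩

lemma sum_card_fiberwise (hg : ∀ a ∈ s, g a < k) : ∑ j : Fin k, #{a ∈ s | g a = j} = #s := by
  have := sum_card_fiberwise_lt hg k
  rwa [filter_true_of_mem fun j _ => j.isLt, filter_true_of_mem hg] at this

lemma card_filter_le_lt {n a b : ℕ} (hb : b ≤ n) :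
    #{p : Fin n | a ≤ (p : ℕ) ∧ (p : ℕ) < b} = b - a := by
  rw [← Nat.card_Ico a b, ← card_image_of_injective _ Fin.val_injective]
  congr 1
  ext x
  simp only [mem_image, mem_filter, mem_univ, true_and, mem_Ico]
  exact ⟨fun ⟨p, hp, hpx⟩ => hpx ▸ hp, fun hx => ⟨⟨x, by omega⟩, hx, rfl⟩⟩

lemma lt_iff_lt_card_filter_lt {n : ℕ} {f : Fin n → ℕ} (hf : Monotone f) (r : Fin n) (j : ℕ) :
    f r < j ↔ (r : ℕ) < #{r' : Fin n | f r' < j} := by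
  constructor
  · intro h
    have hsub : Iic r ⊆ filter (fun r' => f r' < j) univ := fun r' hr' => by
      rw [mem_Iic] at hr'
      exact mem_filter.2 ⟨mem_univ _, (hf hr').trans_lt h⟩
    have := card_le_card hsub
    rw [Fin.card_Iic] at this
    omega
  · intro h
    by_contra! hle
    have hsub : filter (fun r' => f r' < j) univ ⊆ Iio r := fun r' hr' => by
      rw [mem_filter] at hr'
      by_contra! h'
      rw [mem_Iio, not_lt] at h'
      exact absurd (hle.trans (hf h')) (not_le.2 hr'.2)
    have := card_le_card hsub
    rw [Fin.card_Iio] at this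
    omega

end Counting

section Blocks

variable (c : List ℕ)

def prefixSum (j : ℕ) : ℕ := (c.take j).sum

@[simp] lemma prefixSum_zero : prefixSum c 0 = 0 := by simp [prefixSum]

lemma prefixSum_succ (j : ℕ) : prefixSum c (j + 1) = prefixSum c j + c.getD j 0 := by
  rw [prefixSum, prefixSum, List.take_add_one, List.sum_append, List.getD_eq_getElem?_getD]
  rcases lt_or_ge j c.length with h | h
  · simp [List.getElem?_eq_getElem h]
  · simp [List.getElem?_eq_none h]

lemma prefixSum_cons_succ (a : ℕ) (j : ℕ) : prefixSum (a :: c) (j + 1) = a + prefixSum c j := by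
  simp [prefixSum]

lemma prefixSum_mono : Monotone (prefixSum c) := fun _ _ h =>
  (List.take_prefix_take_left h).sublist.sum_le_sum fun _ _ => Nat.zero_le _

lemma prefixSum_of_length_le {j : ℕ} (h : c.length ≤ j) : prefixSum c j = c.sum := by
  rw [prefixSum, List.take_of_length_le h]

lemma prefixSum_le_sum (j : ℕ) : prefixSum c j ≤ c.sum :=
  (List.take_prefix j c).sublist.sum_le_sum fun _ _ => Nat.zero_le _

/-- The index of the part of `c` containing position `p` (positions counted from `0`). -/
def block (p : ℕ) : ℕ := #{j ∈ range c.length | prefixSum c (j + 1) ≤ p}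

variable {c}

lemma block_mono : Monotone (block c) := fun _ _ h =>
  card_le_card (monotone_filter_right _ fun _ _ hj => hj.trans h)

lemma block_lt_iff {p : ℕ} (hp : p < c.sum) {s : ℕ} : block c p < s ↔ p < prefixSum c s := by
  constructor
  · intro hs
    by_contra! hle
    have hsl : s ≤ c.length := by
      by_contra! h
      rw [prefixSum_of_length_le c h.le] at hle
      omega
    have : range s ⊆ {j ∈ range c.length | prefixSum c (j + 1) ≤ p} := fun j hj => by
      rw [mem_range] at hj
      exact mem_filter.2 ⟨mem_range.2 (by omega), (prefixSum_mono c (by omega)).trans hle⟩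
    have := card_le_card this
    rw [card_range] at this
    exact absurd hs (not_lt.2 this)
  · intro hs
    have : {j ∈ range c.length | prefixSum c (j + 1) ≤ p} ⊆ range (s - 1) := fun j hj => by
      rw [mem_filter] at hj
      by_contra! h
      rw [mem_range, not_lt] at h
      have := prefixSum_mono c (show s ≤ j + 1 by omega)
      omega
    have hs0 : s ≠ 0 := by rintro rfl; simp at hs
    have := card_le_card this
    rw [card_range] at this
    exact lt_of_le_of_lt this (by omega)

lemma block_eq_iff {p : ℕ} (hp : p < c.sum) {s : ℕ} :
    block c p = s ↔ prefixSum c s ≤ p ∧ p < prefixSum c (s + 1) := by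
  rw [← block_lt_iff hp, ← not_lt, ← block_lt_iff hp]
  omega

lemma block_lt_length {p : ℕ} (hp : p < c.sum) : block c p < c.length := by
  rwa [block_lt_iff hp, prefixSum_of_length_le c le_rfl]

lemma prefixSum_block_le {p : ℕ} (hp : p < c.sum) : prefixSum c (block c p) ≤ p :=
  ((block_eq_iff hp).1 rfl).1

lemma mem_range_prefixSum_iff {i : ℕ} (hi : 0 < i) (hic : i < c.sum) :
    i ∈ Set.range (prefixSum c) ↔ block c (i - 1) < block c i := by
  constructor
  · rintro ⟨j, rfl⟩
    have hlt : block c (prefixSum c j - 1) < j := (block_lt_iff (by omega)).2 (by omega)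
    have hge : j ≤ block c (prefixSum c j) := not_lt.1 fun h => lt_irrefl _ ((block_lt_iff hic).1 h)
    omega
  · intro h
    rw [block_lt_iff (by omega)] at h
    exact ⟨block c i, le_antisymm (prefixSum_block_le hic) (by omega)⟩

variable {n : ℕ}

lemma card_filter_block_lt (hc : c.sum = n) (s : ℕ) :
    #{p : Fin n | block c p < s} = prefixSum c s := by
  have : #{p : Fin n | block c p < s} = #{p : Fin n | (p : ℕ) < prefixSum c s} := by
    congr 1
    exact filter_congr fun p _ => block_lt_iff (by rw [hc]; exact p.isLt)
  rw [this, Fin.card_filter_val_lt, min_eq_right (hc ▸ prefixSum_le_sum c s)]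

lemma card_filter_block_eq (hc : c.sum = n) (s : ℕ) :
    #{p : Fin n | block c p = s} = c.getD s 0 := by
  have hsplit : filter (fun p : Fin n => block c p < s + 1) univ =
      filter (fun p : Fin n => block c p = s) univ ∪
        filter (fun p : Fin n => block c p < s) univ := by
    ext p
    simp only [mem_filter, mem_union, mem_univ, true_and]
    omega
  have := card_union_of_disjoint
    (disjoint_filter (s := univ).2 fun (p : Fin n) _ (h : block c p = s) => h.not_lt)
  rw [← hsplit, card_filter_block_lt hc, card_filter_block_lt hc, prefixSum_succ] at this
  omega

end Blocks

section PrefixSums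

variable (c : List ℕ)

lemma range_prefixSum_cons (a : ℕ) :
    Set.range (prefixSum (a :: c)) = insert 0 ((a + ·) '' Set.range (prefixSum c)) := by
  ext s
  constructor
  · rintro ⟨_ | j, rfl⟩
    · simp
    · right
      exact ⟨prefixSum c j, ⟨j, rfl⟩, (prefixSum_cons_succ c a j).symm⟩
  · rintro (rfl | ⟨_, ⟨j, rfl⟩, rfl⟩)
    · exact ⟨0, prefixSum_zero _⟩
    · exact ⟨j + 1, prefixSum_cons_succ c a j⟩

lemma range_prefixSum_filter_ne_zero :
    Set.range (prefixSum (c.filter (· ≠ 0))) = Set.range (prefixSum c) := by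
  induction c with
  | nil => rfl
  | cons a t ih =>
    by_cases ha : a = 0
    · subst ha
      rw [List.filter_cons_of_neg (by simp), ih, range_prefixSum_cons]
      simp only [zero_add, Set.image_id']
      exact (Set.insert_eq_of_mem (Set.mem_range.2 ⟨0, prefixSum_zero t⟩)).symm
    · rw [List.filter_cons_of_pos (by simpa using ha), range_prefixSum_cons, range_prefixSum_cons,
        ih]

lemma sum_filter_ne_zero : (c.filter (· ≠ 0)).sum = c.sum := by
  induction c with
  | nil => rfl
  | cons a t ih =>
    by_cases ha : a = 0
    · subst ha
      rw [List.filter_cons_of_neg (by simp), ih, List.sum_cons, zero_add]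
    · rw [List.filter_cons_of_pos (by simpa using ha), List.sum_cons, List.sum_cons, ih]

variable {c}

lemma mem_partialSumsS_iff {i : ℕ} (hi : 0 < i) (hic : i < c.sum) :
    i ∈ partialSumsS c ↔ i ∈ Set.range (prefixSum c) := by
  constructor
  · rintro ⟨j, -, -, rfl⟩
    exact ⟨j, rfl⟩
  · rintro ⟨j, rfl⟩
    refine ⟨j, Nat.pos_of_ne_zero ?_, ?_, rfl⟩
    · rintro rfl
      simp at hi
    · by_contra! h
      rw [prefixSum_of_length_le c h] at hic
      exact lt_irrefl _ hic

lemma mem_partialSumsS_filter_ne_zero_iff {i : ℕ} (hi : 0 < i) (hic : i < c.sum) :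
    i ∈ partialSumsS (c.filter (· ≠ 0)) ↔ i ∈ partialSumsS c := by
  rw [mem_partialSumsS_iff hi hic, mem_partialSumsS_iff hi (by rwa [sum_filter_ne_zero]),
    range_prefixSum_filter_ne_zero]

end PrefixSums

section Descents

variable {n : ℕ}

def BlockIncreasing (c : List ℕ) (σ : Perm (Fin n)) : Prop :=
  ∀ p q : Fin n, p < q → block c p = block c q → σ p < σ q

instance (c : List ℕ) : DecidablePred (BlockIncreasing (n := n) c) := fun _ => by
  unfold BlockIncreasing
  infer_instance

lemma blockIncreasing_iff_succ {c : List ℕ} {σ : Perm (Fin n)} :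
    BlockIncreasing c σ ↔
      ∀ p q : Fin n, (q : ℕ) = p + 1 → block c p = block c q → σ p < σ q := by
  refine ⟨fun h p q hpq => h p q (Fin.lt_def.2 (by omega)), fun h p q hpq hb => ?_⟩
  obtain ⟨d, hd⟩ : ∃ d, (q : ℕ) = p + d + 1 := ⟨q - p - 1, by rw [Fin.lt_def] at hpq; omega⟩
  induction d generalizing q with
  | zero => exact h p q (by omega) hb
  | succ d ih =>
    let m : Fin n := ⟨p + d + 1, by omega⟩
    have hpm : block c p ≤ block c m := block_mono (by simp [m]; omega)
    have hmq : block c m ≤ block c q := block_mono (by simp [m]; omega)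
    exact (ih m (Fin.lt_def.2 (by simp [m])) (by omega) rfl).trans (h m q (by simp [m]; omega)
      (by omega))

lemma BlockIncreasing.block_le_block {c d : List ℕ} {σ : Perm (Fin n)}
    (hσ : BlockIncreasing c σ) {p q : Fin n} (hb : block c p = block c q) (hpq : p ≤ q) :
    block d (σ p) ≤ block d (σ q) := by
  rcases hpq.lt_or_eq with hlt | rfl
  · exact block_mono (hσ p q hlt hb).le
  · exact le_rfl

lemma descentSetS_subset_iff {σ : Perm (Fin n)} {S : Set ℕ} :
    descentSetS σ ⊆ S ↔ ∀ p q : Fin n, (q : ℕ) = p + 1 → (q : ℕ) ∉ S → σ p < σ q := by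
  constructor
  · intro h p q hpq hq
    by_contra! hle
    have hne : σ q ≠ σ p := fun he => by
      have := congrArg Fin.val (σ.injective he)
      omega
    have hp : (⟨(q : ℕ) - 1, by omega⟩ : Fin n) = p := Fin.ext (by simp; omega)
    refine hq (h ⟨by omega, q.isLt, ?_⟩)
    rw [hp]
    exact Fin.lt_def.1 (lt_of_le_of_ne hle hne)
  · rintro h i ⟨hi1, hi2, hlt⟩
    by_contra hi
    exact absurd hlt (not_lt.2 (h ⟨i - 1, by omega⟩ ⟨i, hi2⟩ (by simp; omega) hi).le)

lemma notMem_partialSumsS_iff {c : List ℕ} (hc : c.sum = n) {p q : Fin n}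
    (hpq : (q : ℕ) = p + 1) : (q : ℕ) ∉ partialSumsS c ↔ block c p = block c q := by
  have hp : (p : ℕ) = q - 1 := by omega
  rw [mem_partialSumsS_iff (by omega) (hc ▸ q.isLt), mem_range_prefixSum_iff (by omega)
    (hc ▸ q.isLt), hp, not_lt]
  exact ⟨fun h => le_antisymm (block_mono (by omega)) h, fun h => h.ge⟩

lemma descentSetS_subset_partialSumsS_iff {c : List ℕ} (hc : c.sum = n) {σ : Perm (Fin n)} :
    descentSetS σ ⊆ partialSumsS c ↔ BlockIncreasing c σ := by
  rw [descentSetS_subset_iff, blockIncreasing_iff_succ]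
  refine forall₂_congr fun p q => forall_congr' fun hpq => ?_
  rw [notMem_partialSumsS_iff hc hpq]

lemma descentSetS_subset_partialSumsS_filter_iff {c : List ℕ} (hc : c.sum = n)
    {σ : Perm (Fin n)} :
    descentSetS σ ⊆ partialSumsS (c.filter (· ≠ 0)) ↔ BlockIncreasing c σ := by
  rw [← descentSetS_subset_partialSumsS_iff hc, descentSetS_subset_iff, descentSetS_subset_iff]
  refine forall₃_congr fun p q hpq => ?_
  rw [mem_partialSumsS_filter_ne_zero_iff (by omega) (hc ▸ q.isLt)]

end Descents

section FlattenRows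

lemma prefixSum_append_of_le {x y : List ℕ} {j : ℕ} (h : j ≤ x.length) :
    prefixSum (x ++ y) j = prefixSum x j := by
  rw [prefixSum, List.take_append_of_le_length h, prefixSum]

lemma prefixSum_append_length_add (x y : List ℕ) (m : ℕ) :
    prefixSum (x ++ y) (x.length + m) = x.sum + prefixSum y m := by
  simp [prefixSum, List.take_append, List.take_of_length_le]

lemma prefixSum_flatten {k : ℕ} (L : List (List ℕ)) (hL : ∀ r ∈ L, r.length = k) (i : ℕ)
    {j : ℕ} (hj : j ≤ k) :
    prefixSum L.flatten (k * i + j) = prefixSum (L.map List.sum) i + prefixSum (L.getD i []) j := by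
  induction L generalizing i with
  | nil => simp [prefixSum]
  | cons a t ih =>
    have ha : a.length = k := hL a List.mem_cons_self
    cases i with
    | zero => simp [prefixSum_append_of_le (ha ▸ hj)]
    | succ i =>
      rw [show k * (i + 1) + j = a.length + (k * i + j) by rw [ha]; ring, List.flatten_cons,
        prefixSum_append_length_add, ih (fun r hr => hL r (List.mem_cons_of_mem a hr)),
        List.map_cons, prefixSum_cons_succ, List.getD_cons_succ, add_assoc]

variable {l k : ℕ} (z : Fin l → Fin k → ℕ)

/-- Unlike `readM`, zero entries are kept, so that the cell `(i, j)` is the part with index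
`k * i + j`. -/
def flattenRows : List ℕ := (List.ofFn fun i => List.ofFn (z i)).flatten

lemma readM_eq_filter_flattenRows : readM z = (flattenRows z).filter (· ≠ 0) := by
  rw [flattenRows, List.filter_flatten, List.map_ofFn]
  rfl

lemma length_flattenRows : (flattenRows z).length = l * k := by
  simp [flattenRows, List.length_flatten, Function.comp_def]

lemma sum_flattenRows : (flattenRows z).sum = ∑ i, ∑ j, z i j := by
  simp [flattenRows, List.sum_flatten, Function.comp_def, List.sum_ofFn]

lemma prefixSum_flattenRows (i : Fin l) {j : ℕ} (hj : j ≤ k) :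
    prefixSum (flattenRows z) (k * i + j) =
      prefixSum (List.ofFn fun i => ∑ j, z i j) i + prefixSum (List.ofFn (z i)) j := by
  rw [flattenRows, prefixSum_flatten _ (by simp) _ hj, List.map_ofFn,
    List.getD_eq_getElem _ _ (by simp), List.getElem_ofFn]
  simp [Function.comp_def, List.sum_ofFn]

lemma getD_flattenRows (i : Fin l) (j : Fin k) :
    (flattenRows z).getD (k * i + j) 0 = z i j := by
  have h : prefixSum (flattenRows z) (k * i + j + 1) =
      prefixSum (List.ofFn fun i => ∑ j, z i j) i + prefixSum (List.ofFn (z i)) (j + 1) :=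
    prefixSum_flattenRows z i j.isLt
  rw [prefixSum_succ, prefixSum_flattenRows z i j.isLt.le, prefixSum_succ,
    List.getD_eq_getElem (List.ofFn (z i)) _ (by simp), List.getElem_ofFn, Fin.eta] at h
  omega

variable {ν : List ℕ} {z : Fin ν.length → Fin k → ℕ}

lemma ofFn_rowSums (hrow : ∀ i, ∑ j, z i j = ν.get i) :
    (List.ofFn fun i => ∑ j, z i j) = ν := by
  rw [funext hrow, List.ofFn_get]

lemma sum_flattenRows_of_rowSums (hrow : ∀ i, ∑ j, z i j = ν.get i) :
    (flattenRows z).sum = ν.sum := by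
  rw [sum_flattenRows, ← List.sum_ofFn, ofFn_rowSums hrow]

def columnOf (z : Fin l → Fin k → ℕ) (p : ℕ) : ℕ := block (flattenRows z) p % k

lemma block_flattenRows_div (hrow : ∀ i, ∑ j, z i j = ν.get i) {p : ℕ} (hp : p < ν.sum) :
    block (flattenRows z) p / k = block ν p := by
  have hF : p < (flattenRows z).sum := by rwa [sum_flattenRows_of_rowSums hrow]
  set b := block (flattenRows z) p
  have hb : b < ν.length * k := length_flattenRows z ▸ block_lt_length hF
  have hk : 0 < k := Nat.pos_of_ne_zero fun h => by simp [h] at hb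
  have hi : b / k < ν.length := (Nat.div_lt_iff_lt_mul hk).2 hb
  have hlow := prefixSum_flattenRows z ⟨b / k, hi⟩ (Nat.zero_le k)
  have hup := prefixSum_flattenRows z ⟨b / k, hi⟩ le_rfl
  rw [ofFn_rowSums hrow, add_zero, prefixSum_zero, add_zero] at hlow
  rw [ofFn_rowSums hrow, prefixSum_of_length_le (List.ofFn _) (by simp), List.sum_ofFn, hrow,
    List.get_eq_getElem, ← List.getD_eq_getElem _ 0, ← prefixSum_succ] at hup
  symm
  rw [block_eq_iff (by omega)]
  have hmod := Nat.div_add_mod b k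
  have hbF := (block_eq_iff hF).1 rfl
  constructor
  · calc prefixSum ν (b / k) = prefixSum (flattenRows z) (k * (b / k)) := hlow.symm
      _ ≤ prefixSum (flattenRows z) b := prefixSum_mono _ (by omega)
      _ ≤ p := hbF.1
  · calc p < prefixSum (flattenRows z) (b + 1) := hbF.2
      _ ≤ prefixSum (flattenRows z) (k * (b / k) + k) :=
        prefixSum_mono _ (by have := Nat.mod_lt b hk; omega)
      _ = prefixSum ν (b / k + 1) := hup

lemma block_flattenRows_eq (hrow : ∀ i, ∑ j, z i j = ν.get i) {p : ℕ} (hp : p < ν.sum) :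
    block (flattenRows z) p = k * block ν p + columnOf z p := by
  rw [← block_flattenRows_div hrow hp, columnOf, Nat.div_add_mod]

end FlattenRows

section BlockMatrix

variable {n : ℕ} {κ ν : List ℕ}

def blockMatrix (κ ν : List ℕ) (τ : Perm (Fin n)) (i : Fin ν.length) (j : Fin κ.length) : ℕ :=
  #{p : Fin n | block ν p = i ∧ block κ (τ p) = j}

lemma prefixSum_blockMatrix_row (hκ : κ.sum = n) (τ : Perm (Fin n)) (i : Fin ν.length)
    (j : ℕ) :
    prefixSum (List.ofFn (blockMatrix κ ν τ i)) j =
      #{p : Fin n | block ν p = i ∧ block κ (τ p) < j} := by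
  have := sum_card_fiberwise_lt (s := {p : Fin n | block ν p = i})
    (g := fun p => block κ (τ p)) (fun p _ => block_lt_length (hκ ▸ (τ p).isLt)) j
  simp only [filter_filter] at this
  rw [prefixSum, List.sum_take_ofFn]
  exact this

lemma sum_blockMatrix_row (hκ : κ.sum = n) (hν : ν.sum = n) (τ : Perm (Fin n))
    (i : Fin ν.length) : ∑ j, blockMatrix κ ν τ i j = ν.get i := by
  have := sum_card_fiberwise (s := {p : Fin n | block ν p = i})
    (g := fun p => block κ (τ p)) (fun p _ => block_lt_length (hκ ▸ (τ p).isLt))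
  simp only [filter_filter] at this
  rw [show ∑ j, blockMatrix κ ν τ i j = _ from this, card_filter_block_eq hν,
    List.getD_eq_getElem _ _ i.isLt, List.get_eq_getElem]

lemma sum_blockMatrix_col (hκ : κ.sum = n) (hν : ν.sum = n) (τ : Perm (Fin n))
    (j : Fin κ.length) : ∑ i, blockMatrix κ ν τ i j = κ.get j := by
  have := sum_card_fiberwise (s := {p : Fin n | block κ (τ p) = j})
    (g := fun p => block ν p) (fun p _ => block_lt_length (hν ▸ p.isLt))
  simp only [filter_filter] at this
  have hτ : #{p : Fin n | block κ (τ p) = j} = #{q : Fin n | block κ q = j} :=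
    card_equiv τ fun p => by simp
  simp only [blockMatrix, and_comm (a := block ν _ = _)]
  rw [this, hτ, card_filter_block_eq hκ, List.getD_eq_getElem _ _ j.isLt, List.get_eq_getElem]

lemma block_flattenRows_blockMatrix (hκ : κ.sum = n) (hν : ν.sum = n) {τ : Perm (Fin n)}
    (hτ : BlockIncreasing ν τ) (p : Fin n) :
    block (flattenRows (blockMatrix κ ν τ)) p = κ.length * block ν p + block κ (τ p) := by
  have hpν : (p : ℕ) < ν.sum := hν ▸ p.isLt
  let i : Fin ν.length := ⟨block ν p, block_lt_length hpν⟩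
  have hj : block κ (τ p) < κ.length := block_lt_length (hκ ▸ (τ p).isLt)
  have hrow := sum_blockMatrix_row hκ hν τ
  have hcell : ∀ j ≤ κ.length,
      prefixSum (flattenRows (blockMatrix κ ν τ)) (κ.length * block ν p + j) =
        prefixSum ν (block ν p) + #{p' : Fin n | block ν p' = block ν p ∧ block κ (τ p') < j} :=
    fun j hj => by
      have := prefixSum_flattenRows (blockMatrix κ ν τ) i hj
      rw [ofFn_rowSums hrow, prefixSum_blockMatrix_row hκ] at this
      exact this
  have hlow := prefixSum_block_le hpν
  have hup := ((block_eq_iff hpν).1 rfl).2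
  rw [block_eq_iff (by rw [sum_flattenRows_of_rowSums hrow]; exact hpν), hcell _ hj.le,
    add_assoc, hcell (block κ (τ p) + 1) hj]
  -- `block κ ∘ τ` is monotone on the part of `ν` containing `p`, so the positions counted in
  -- `hcell` form an initial segment of that part.
  constructor
  · have hsub : ({p' : Fin n | block ν p' = block ν p ∧ block κ (τ p') < block κ (τ p)} :
        Finset _) ⊆ ({p' : Fin n | prefixSum ν (block ν p) ≤ p' ∧ (p' : ℕ) < p} : Finset _) := by
      intro p' hp'
      simp only [mem_filter, mem_univ, true_and] at hp' ⊢
      refine ⟨hp'.1 ▸ prefixSum_block_le (hν ▸ p'.isLt), not_le.1 fun hle => ?_⟩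
      exact (hτ.block_le_block hp'.1.symm (Fin.le_def.2 hle)).not_gt hp'.2
    have := card_le_card hsub
    rw [card_filter_le_lt p.isLt.le] at this
    omega
  · have hsub : ({p' : Fin n | prefixSum ν (block ν p) ≤ p' ∧ (p' : ℕ) < p + 1} : Finset _) ⊆
        ({p' : Fin n | block ν p' = block ν p ∧ block κ (τ p') < block κ (τ p) + 1} :
          Finset _) := by
      intro p' hp'
      simp only [mem_filter, mem_univ, true_and] at hp' ⊢
      have hb : block ν p' = block ν p := (block_eq_iff (hν ▸ p'.isLt)).2 ⟨hp'.1, by omega⟩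
      exact ⟨hb, Nat.lt_add_one_of_le (hτ.block_le_block hb (Fin.le_def.2 (by omega)))⟩
    have := card_le_card hsub
    rw [card_filter_le_lt (show (p : ℕ) + 1 ≤ n from p.isLt)] at this
    omega

lemma blockIncreasing_mul (hκ : κ.sum = n) (hν : ν.sum = n) {σ τ : Perm (Fin n)}
    (hσ : BlockIncreasing κ σ) (hτ : BlockIncreasing ν τ) :
    BlockIncreasing (flattenRows (blockMatrix κ ν τ)) (σ * τ) := by
  intro p q hpq hb
  rw [block_flattenRows_blockMatrix hκ hν hτ, block_flattenRows_blockMatrix hκ hν hτ,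
    mul_add_eq_mul_add_iff (block_lt_length (hκ ▸ (τ p).isLt))
      (block_lt_length (hκ ▸ (τ q).isLt))] at hb
  exact hσ _ _ (hτ p q hpq hb.1) hb.2

end BlockMatrix

section Sorting

variable {n : ℕ} {κ ν : List ℕ}

lemma eq_block_of_monotone (hκ : κ.sum = n) {f : Fin n → ℕ} (hf : Monotone f)
    (hcard : ∀ j, #{r : Fin n | f r < j} = prefixSum κ j) (r : Fin n) : f r = block κ r :=
  eq_of_forall_gt_iff fun j => by
    rw [lt_iff_lt_card_filter_lt hf, hcard, block_lt_iff (hκ ▸ r.isLt)]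

variable {z : Fin ν.length → Fin κ.length → ℕ}

lemma card_filter_block_columnOf (hν : ν.sum = n) (hrow : ∀ i, ∑ j, z i j = ν.get i)
    (i : Fin ν.length) (j : Fin κ.length) :
    #{p : Fin n | block ν p = i ∧ columnOf z p = j} = z i j := by
  have hcell : ∀ p : Fin n, block ν p = i ∧ columnOf z p = j ↔
      block (flattenRows z) p = κ.length * i + j := fun p => by
    rw [block_flattenRows_eq hrow (hν ▸ p.isLt),
      mul_add_eq_mul_add_iff (show columnOf z p < κ.length from Nat.mod_lt _ j.pos) j.isLt]
  rw [filter_congr fun p _ => hcell p,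
    card_filter_block_eq ((sum_flattenRows_of_rowSums hrow).trans hν), getD_flattenRows]

lemma card_filter_columnOf_lt (hκ : κ.sum = n) (hν : ν.sum = n)
    (hcol : ∀ j, ∑ i, z i j = κ.get j) (hrow : ∀ i, ∑ j, z i j = ν.get i) (j : ℕ) :
    #{p : Fin n | columnOf z p < j} = prefixSum κ j := by
  have hcolumn : ∀ p : Fin n, columnOf z p < κ.length := fun p =>
    Nat.mod_lt _ (κ.length_pos_of_sum_pos (hκ ▸ p.pos))
  have hfiber : ∀ j' : Fin κ.length, #{p : Fin n | columnOf z p = j'} = κ.get j' := fun j' => by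
    rw [← sum_card_fiberwise (s := {p : Fin n | columnOf z p = j'}) (g := fun p => block ν p)
      fun p _ => block_lt_length (hν ▸ p.isLt), ← hcol]
    refine sum_congr rfl fun i _ => ?_
    rw [filter_filter, ← card_filter_block_columnOf hν hrow i j', filter_congr fun p _ => and_comm]
  have hκj := List.sum_take_ofFn κ.get j
  rw [List.ofFn_get] at hκj
  rw [← sum_card_fiberwise_lt (s := univ) (fun p _ => hcolumn p), prefixSum, hκj]
  exact sum_congr rfl fun j' _ => by rw [← hfiber]

def sortKey {l k : ℕ} (z : Fin l → Fin k → ℕ) (π : Perm (Fin n)) (p : Fin n) : ℕ ×ₗ Fin n :=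
  toLex (columnOf z p, π p)

lemma sortKey_injective {l k : ℕ} (z : Fin l → Fin k → ℕ) (π : Perm (Fin n)) :
    Function.Injective (sortKey z π) := fun a b h => by
  simp only [sortKey, toLex_inj, Prod.mk.injEq] at h
  exact π.injective h.2

lemma strictMono_sortKey_sort {l k : ℕ} (z : Fin l → Fin k → ℕ) (π : Perm (Fin n)) :
    StrictMono (sortKey z π ∘ Tuple.sort (sortKey z π)) :=
  (Tuple.monotone_sort _).strictMono_of_injective
    ((sortKey_injective z π).comp (Equiv.injective _))

lemma columnOf_sort (hκ : κ.sum = n) (hν : ν.sum = n) (hcol : ∀ j, ∑ i, z i j = κ.get j)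
    (hrow : ∀ i, ∑ j, z i j = ν.get i) (π : Perm (Fin n)) (r : Fin n) :
    columnOf z (Tuple.sort (sortKey z π) r) = block κ r := by
  refine eq_block_of_monotone hκ (f := fun r => columnOf z (Tuple.sort (sortKey z π) r))
    (fun a b hab => ?_) (fun j => ?_) r
  · exact Prod.Lex.monotone_fst _ _ (Tuple.monotone_sort (sortKey z π) hab)
  · rw [← card_filter_columnOf_lt hκ hν hcol hrow j]
    exact card_equiv (Tuple.sort (sortKey z π)) fun p => by simp

lemma blockIncreasing_mul_sort (hκ : κ.sum = n) (hν : ν.sum = n)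
    (hcol : ∀ j, ∑ i, z i j = κ.get j) (hrow : ∀ i, ∑ j, z i j = ν.get i) (π : Perm (Fin n)) :
    BlockIncreasing κ (π * Tuple.sort (sortKey z π)) := by
  intro r r' hrr hb
  have := strictMono_sortKey_sort z π hrr
  simp only [Function.comp_apply, sortKey, Prod.Lex.toLex_lt_toLex,
    columnOf_sort hκ hν hcol hrow, hb, lt_irrefl, true_and, false_or] at this
  exact this

lemma blockIncreasing_sort_inv (hν : ν.sum = n) (hrow : ∀ i, ∑ j, z i j = ν.get i)
    {π : Perm (Fin n)} (hπ : BlockIncreasing (flattenRows z) π) :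
    BlockIncreasing ν (Tuple.sort (sortKey z π))⁻¹ := by
  intro p q hpq hb
  have hp := block_flattenRows_eq hrow (p := p) (hν ▸ p.isLt)
  have hq := block_flattenRows_eq hrow (p := q) (hν ▸ q.isLt)
  have hkey : sortKey z π p < sortKey z π q := by
    have hmono : block (flattenRows z) p ≤ block (flattenRows z) q := block_mono hpq.le
    rw [hp, hq, hb] at hmono
    rw [sortKey, sortKey, Prod.Lex.toLex_lt_toLex]
    rcases (Nat.le_of_add_le_add_left hmono).lt_or_eq with hlt | heq
    · exact Or.inl hlt
    · exact Or.inr ⟨heq, hπ p q hpq (by rw [hp, hq, hb, heq])⟩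
  rw [← (strictMono_sortKey_sort z π).lt_iff_lt]
  simpa only [Function.comp_apply, Perm.coe_inv, apply_symm_apply] using hkey

lemma blockMatrix_sort_inv (hκ : κ.sum = n) (hν : ν.sum = n)
    (hcol : ∀ j, ∑ i, z i j = κ.get j) (hrow : ∀ i, ∑ j, z i j = ν.get i) (π : Perm (Fin n)) :
    blockMatrix κ ν (Tuple.sort (sortKey z π))⁻¹ = z := by
  funext i j
  rw [blockMatrix, ← card_filter_block_columnOf hν hrow i j]
  refine congrArg card (filter_congr fun p _ => ?_)
  rw [← columnOf_sort hκ hν hcol hrow π, Perm.coe_inv, apply_symm_apply]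

lemma sort_sortKey_blockMatrix (hκ : κ.sum = n) (hν : ν.sum = n) {σ τ : Perm (Fin n)}
    (hσ : BlockIncreasing κ σ) (hτ : BlockIncreasing ν τ) :
    Tuple.sort (sortKey (blockMatrix κ ν τ) (σ * τ)) = τ⁻¹ := by
  have hkey : ∀ r, sortKey (blockMatrix κ ν τ) (σ * τ) (τ⁻¹ r) = toLex (block κ r, σ r) := by
    intro r
    rw [sortKey, columnOf, block_flattenRows_blockMatrix hκ hν hτ, Nat.mul_add_mod,
      Perm.mul_apply, Perm.coe_inv, apply_symm_apply,
      Nat.mod_eq_of_lt (block_lt_length (hκ ▸ r.isLt))]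
  have hstrict : StrictMono (sortKey (blockMatrix κ ν τ) (σ * τ) ∘ ⇑τ⁻¹) := fun a b hab => by
    simp only [Function.comp_apply, hkey, Prod.Lex.toLex_lt_toLex]
    rcases (block_mono hab.le : block κ a ≤ block κ b).lt_or_eq with hlt | heq
    · exact Or.inl hlt
    · exact Or.inr ⟨heq, hσ a b hab heq⟩
  refine (Tuple.eq_sort_iff.2 ⟨hstrict.monotone, fun a b hab h => ?_⟩).symm
  exact absurd (hstrict.injective h) hab.ne

end Sorting

section Product

variable {n : ℕ} {κ ν : List ℕ}

lemma BS_eq_sum_of_iff {c c' : List ℕ}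
    (h : ∀ σ : Perm (Fin n), descentSetS σ ⊆ partialSumsS c ↔ BlockIncreasing c' σ) :
    BS n c = ∑ σ : Perm (Fin n) with BlockIncreasing c' σ, MonoidAlgebra.single σ 1 := by
  have hset : {σ : Perm (Fin n) | descentSetS σ ⊆ partialSumsS c} =
      ↑({σ : Perm (Fin n) | BlockIncreasing c' σ} : Finset _) := by
    ext σ
    simp [h]
  rw [BS, hset, finsum_mem_coe_finset]

lemma BS_eq_sum_blockIncreasing {c : List ℕ} (hc : c.sum = n) :
    BS n c = ∑ σ : Perm (Fin n) with BlockIncreasing c σ, MonoidAlgebra.single σ 1 :=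
  BS_eq_sum_of_iff fun _ => descentSetS_subset_partialSumsS_iff hc

lemma BS_readM_eq_sum (hν : ν.sum = n) {z : Fin ν.length → Fin κ.length → ℕ}
    (hrow : ∀ i, ∑ j, z i j = ν.get i) :
    BS n (readM z) =
      ∑ π : Perm (Fin n) with BlockIncreasing (flattenRows z) π, MonoidAlgebra.single π 1 :=
  BS_eq_sum_of_iff fun _ => by
    rw [readM_eq_filter_flattenRows]
    exact descentSetS_subset_partialSumsS_filter_iff ((sum_flattenRows_of_rowSums hrow).trans hν)

lemma finite_setOf_sum_eq (κ ν : List ℕ) :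
    {z : Fin ν.length → Fin κ.length → ℕ |
      (∀ j, ∑ i, z i j = κ.get j) ∧ ∀ i, ∑ j, z i j = ν.get i}.Finite :=
  (Set.Finite.pi fun _ => Set.Finite.pi fun j => Set.finite_Iic (κ.get j)).subset
    fun z hz i _ j _ => Set.mem_Iic.2 <|
      hz.1 j ▸ single_le_sum (f := fun i => z i j) (fun _ _ => Nat.zero_le _) (mem_univ i)

lemma sum_mul_eq_sum_sigma (hκ : κ.sum = n) (hν : ν.sum = n)
    {Z : Finset (Fin ν.length → Fin κ.length → ℕ)}
    (hZ : ∀ z, z ∈ Z ↔ (∀ j, ∑ i, z i j = κ.get j) ∧ ∀ i, ∑ j, z i j = ν.get i)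
    {M : Type*} [AddCommMonoid M] (f : Perm (Fin n) → M) :
    ∑ x ∈ univ.filter (BlockIncreasing κ) ×ˢ univ.filter (BlockIncreasing ν), f (x.1 * x.2) =
      ∑ y ∈ Z.sigma fun z => univ.filter (BlockIncreasing (flattenRows z)), f y.2 := by
  refine sum_nbij' (fun x => ⟨blockMatrix κ ν x.2, x.1 * x.2⟩)
    (fun y => (y.2 * Tuple.sort (sortKey y.1 y.2), (Tuple.sort (sortKey y.1 y.2))⁻¹))
    ?_ ?_ ?_ ?_ fun _ _ => rfl
  · rintro ⟨σ, τ⟩ hx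
    simp only [mem_product, mem_filter, mem_univ, true_and] at hx
    simp only [mem_sigma, hZ, mem_filter, mem_univ, true_and]
    exact ⟨⟨sum_blockMatrix_col hκ hν τ, sum_blockMatrix_row hκ hν τ⟩,
      blockIncreasing_mul hκ hν hx.1 hx.2⟩
  · rintro ⟨z, π⟩ hy
    simp only [mem_sigma, hZ, mem_filter, mem_univ, true_and] at hy
    obtain ⟨⟨hcol, hrow⟩, hπ⟩ := hy
    simp only [mem_product, mem_filter, mem_univ, true_and]
    exact ⟨blockIncreasing_mul_sort hκ hν hcol hrow π, blockIncreasing_sort_inv hν hrow hπ⟩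
  · rintro ⟨σ, τ⟩ hx
    simp only [mem_product, mem_filter, mem_univ, true_and] at hx
    simp only [sort_sortKey_blockMatrix hκ hν hx.1 hx.2, mul_inv_cancel_right, inv_inv]
  · rintro ⟨z, π⟩ hy
    simp only [mem_sigma, hZ, mem_filter, mem_univ, true_and] at hy
    obtain ⟨⟨hcol, hrow⟩, -⟩ := hy
    simp only [blockMatrix_sort_inv hκ hν hcol hrow π, mul_inv_cancel_right]

end Product

end DescentAlgebra

open DescentAlgebra

theorem stmt_12_general (n : ℕ) (κ ν : List ℕ)
    (hκ : κ.sum = n)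
    (hν : ν.sum = n) :
    BS n κ * BS n ν =
      ∑ᶠ z ∈ {z : Fin ν.length → Fin κ.length → ℕ |
          (∀ j, ∑ i, z i j = κ.get j) ∧ (∀ i, ∑ j, z i j = ν.get i)},
        BS n (readM z) := by
  have hZ := finite_setOf_sum_eq κ ν
  rw [finsum_mem_eq_finite_toFinset_sum _ hZ]
  calc BS n κ * BS n ν
      = ∑ x ∈ Finset.univ.filter (BlockIncreasing κ) ×ˢ Finset.univ.filter (BlockIncreasing ν),
          MonoidAlgebra.single (x.1 * x.2) (1 : ℚ) := by
        rw [BS_eq_sum_blockIncreasing hκ, BS_eq_sum_blockIncreasing hν, Finset.sum_mul_sum,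
          Finset.sum_product]
        simp only [MonoidAlgebra.single_mul_single, one_mul]
    _ = ∑ y ∈ hZ.toFinset.sigma fun z => Finset.univ.filter (BlockIncreasing (flattenRows z)),
          MonoidAlgebra.single y.2 (1 : ℚ) :=
        sum_mul_eq_sum_sigma hκ hν (fun _ => hZ.mem_toFinset) fun π => MonoidAlgebra.single π 1
    _ = ∑ z ∈ hZ.toFinset, BS n (readM z) := by
        rw [Finset.sum_sigma]
        exact Finset.sum_congr rfl fun z hz => (BS_readM_eq_sum hν (hZ.mem_toFinset.1 hz).2).symm

/-- Multiplication in the descent algebra of the symmetric group: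
`B_κ B_ν = Σ_z B_{r(z)}`, summed over all `l × k` matrices `z` of non-negative
integers with column sums `κ_j` and row sums `ν_i`. -/
theorem stmt_12 (n : ℕ) (κ ν : List ℕ)
    (hκpos : ∀ x ∈ κ, 0 < x) (hκ : κ.sum = n)
    (hνpos : ∀ x ∈ ν, 0 < x) (hν : ν.sum = n) :
    BS n κ * BS n ν =
      ∑ᶠ z ∈ {z : Fin ν.length → Fin κ.length → ℕ |
          (∀ j, ∑ i, z i j = κ.get j) ∧ (∀ i, ∑ j, z i j = ν.get i)},
        BS n (readM z) :=
  stmt_12_general n κ ν hκ hν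
end
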